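/- arXiv:2409.15863 — 3 statements merged into one kernel-verified Lean document; each statement's English description precedes it below -/
import Mathlib

section
/- Vertical-difference bound (estimate of the term S₁ in the continuous trace proof): there exists a constant C depending only on d such that ∫_{ℝ^{d-1}} ∫_{ℝ^{d-1}} |u(x',0) − u(x', |x'−y'|)|² / |x'−y'|^d dx' dy' ≤ C ∫_Ω |∂_d u|², where ∂_d u denotes the partial derivative of u in the last coordinate. -/
open MeasureTheory Set ENNReal


lemma hardy_pointwise (F G : ℝ → ℝ) (hG : Continuous G)
    (hF : ∀ r, HasDerivAt F (G r) r) (hF0 : F 0 = 0) {r : ℝ} (hr : 0 < r) :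
    ENNReal.ofReal (F r ^ 2 / r ^ 2) ≤
      ENNReal.ofReal (2 * r ^ (-(3:ℝ)/2)) *
        ∫⁻ t in Ioc (0:ℝ) r, ENNReal.ofReal (t ^ ((1:ℝ)/2) * G t ^ 2) := by
  set ψ : ℝ → ℝ≥0∞ := fun t => ENNReal.ofReal (t ^ ((1:ℝ)/2) * G t ^ 2) with hψ
  -- F r = ∫ t in 0..r, G t
  have hFr : F r = ∫ t in (0:ℝ)..r, G t := by
    rw [intervalIntegral.integral_eq_sub_of_hasDerivAt (fun x _ => hF x)
      (hG.intervalIntegrable 0 r), hF0, sub_zero]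
  have habs : |F r| ≤ ∫ t in Ioc (0:ℝ) r, |G t| := by
    rw [hFr, ← intervalIntegral.integral_of_le hr.le]
    exact intervalIntegral.abs_integral_le_integral_abs hr.le
  -- pass to lintegral
  have hGint : IntegrableOn (fun t => |G t|) (Ioc 0 r) := (hG.abs).integrableOn_Ioc
  have h1 : ENNReal.ofReal |F r| ≤ ∫⁻ t in Ioc (0:ℝ) r, ENNReal.ofReal |G t| := by
    rw [← ofReal_integral_eq_lintegral_ofReal hGint
      (ae_of_all _ fun t => abs_nonneg _)]
    exact ENNReal.ofReal_le_ofReal habs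
  set f : ℝ → ℝ≥0∞ := fun t => ENNReal.ofReal (t ^ (-(1:ℝ)/4)) with hf
  set g : ℝ → ℝ≥0∞ := fun t => ENNReal.ofReal (t ^ ((1:ℝ)/4) * |G t|) with hg
  have hfm : Measurable f := ENNReal.measurable_ofReal.comp (measurable_id.pow_const _)
  have hgm : Measurable g := ENNReal.measurable_ofReal.comp
    ((measurable_id.pow_const _).mul hG.measurable.abs)
  -- split the integrand on Ioc 0 r
  have hsplit : ∫⁻ t in Ioc (0:ℝ) r, ENNReal.ofReal |G t| = ∫⁻ t in Ioc (0:ℝ) r, (f * g) t := by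
    refine setLIntegral_congr_fun measurableSet_Ioc (fun t ht => ?_)
    have ht0 : (0:ℝ) < t := ht.1
    simp only [hf, hg, Pi.mul_apply]
    rw [← ENNReal.ofReal_mul (Real.rpow_nonneg ht0.le _), ← mul_assoc,
      ← Real.rpow_add ht0]
    norm_num
  -- Hölder
  have hconj : Real.HolderConjugate 2 2 := Real.HolderConjugate.two_two
  have hholder := ENNReal.lintegral_mul_le_Lp_mul_Lq (volume.restrict (Ioc (0:ℝ) r)) hconj
    hfm.aemeasurable hgm.aemeasurable
  -- compute ∫⁻ f ^ 2
  have hfsq : ∫⁻ t in Ioc (0:ℝ) r, f t ^ (2:ℝ) = ENNReal.ofReal (2 * r ^ ((1:ℝ)/2)) := by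
    have e1 : ∫⁻ t in Ioc (0:ℝ) r, f t ^ (2:ℝ)
        = ∫⁻ t in Ioc (0:ℝ) r, ENNReal.ofReal (t ^ (-(1:ℝ)/2)) := by
      refine setLIntegral_congr_fun measurableSet_Ioc (fun t ht => ?_)
      show ENNReal.ofReal (t ^ (-(1:ℝ)/4)) ^ (2:ℝ) = _
      rw [ENNReal.ofReal_rpow_of_nonneg (Real.rpow_nonneg ht.1.le _) (by norm_num : (0:ℝ) ≤ 2),
        ← Real.rpow_mul ht.1.le]
      norm_num
    rw [e1, ← ofReal_integral_eq_lintegral_ofReal]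
    · congr 1
      have : ∫ t in Ioc (0:ℝ) r, t ^ (-(1:ℝ)/2) = ∫ t in (0:ℝ)..r, t ^ (-(1:ℝ)/2) :=
        (intervalIntegral.integral_of_le hr.le).symm
      rw [this, integral_rpow (Or.inl (by norm_num))]
      rw [Real.zero_rpow (by norm_num)]
      ring_nf
    · exact (intervalIntegral.intervalIntegrable_rpow' (by norm_num)).1
    · filter_upwards [ae_restrict_mem measurableSet_Ioc] with t ht
      exact Real.rpow_nonneg ht.1.le _
  -- g ^ 2 = ψ on Ioc
  have hgsq : ∫⁻ t in Ioc (0:ℝ) r, g t ^ (2:ℝ) = ∫⁻ t in Ioc (0:ℝ) r, ψ t := by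
    refine setLIntegral_congr_fun measurableSet_Ioc (fun t ht => ?_)
    show ENNReal.ofReal (t ^ ((1:ℝ)/4) * |G t|) ^ (2:ℝ) = _
    rw [ENNReal.ofReal_rpow_of_nonneg
      (mul_nonneg (Real.rpow_nonneg ht.1.le _) (abs_nonneg _)) (by norm_num : (0:ℝ) ≤ 2)]
    congr 1
    rw [Real.mul_rpow (Real.rpow_nonneg ht.1.le _) (abs_nonneg _),
      ← Real.rpow_mul ht.1.le]
    rw [show |G t| ^ (2:ℝ) = |G t| ^ (2:ℕ) from (Real.rpow_natCast _ 2).symm ▸ by norm_num,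
      sq_abs]
    norm_num
  -- combine
  set B := ∫⁻ t in Ioc (0:ℝ) r, ψ t with hB
  have hmain : ENNReal.ofReal |F r| ≤
      (ENNReal.ofReal (2 * r ^ ((1:ℝ)/2))) ^ ((1:ℝ)/2) * B ^ ((1:ℝ)/2) := by
    calc ENNReal.ofReal |F r| ≤ ∫⁻ t in Ioc (0:ℝ) r, ENNReal.ofReal |G t| := h1
    _ = ∫⁻ t in Ioc (0:ℝ) r, (f * g) t := hsplit
    _ ≤ _ := by rw [← hfsq, ← hgsq]; exact hholder
  have hsq : (ENNReal.ofReal |F r|) ^ (2:ℕ) ≤ ENNReal.ofReal (2 * r ^ ((1:ℝ)/2)) * B := by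
    calc (ENNReal.ofReal |F r|) ^ (2:ℕ)
        ≤ ((ENNReal.ofReal (2 * r ^ ((1:ℝ)/2))) ^ ((1:ℝ)/2) * B ^ ((1:ℝ)/2)) ^ (2:ℕ) :=
          pow_le_pow_left' hmain 2
    _ = _ := by
        rw [mul_pow, ← ENNReal.rpow_natCast (_ ^ ((1:ℝ)/2)) 2,
          ← ENNReal.rpow_natCast (B ^ ((1:ℝ)/2)) 2, ← ENNReal.rpow_mul, ← ENNReal.rpow_mul]
        norm_num
  have hr2 : (0:ℝ) < r ^ 2 := by positivity
  calc ENNReal.ofReal (F r ^ 2 / r ^ 2)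
      = ENNReal.ofReal ((r ^ 2)⁻¹) * ENNReal.ofReal (|F r| ^ 2) := by
        rw [← ENNReal.ofReal_mul (by positivity), sq_abs]
        ring_nf
  _ = ENNReal.ofReal ((r ^ 2)⁻¹) * (ENNReal.ofReal |F r|) ^ (2:ℕ) := by
        rw [ENNReal.ofReal_pow (abs_nonneg _)]
  _ ≤ ENNReal.ofReal ((r ^ 2)⁻¹) * (ENNReal.ofReal (2 * r ^ ((1:ℝ)/2)) * B) :=
        mul_le_mul_right hsq _
  _ = ENNReal.ofReal ((r ^ 2)⁻¹ * (2 * r ^ ((1:ℝ)/2))) * B := by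
        rw [← mul_assoc, ← ENNReal.ofReal_mul (by positivity : (0:ℝ) ≤ (r ^ 2)⁻¹)]
  _ = ENNReal.ofReal (2 * r ^ (-(3:ℝ)/2)) * B := by
        congr 2
        rw [← Real.rpow_natCast r 2, ← Real.rpow_neg_one (r ^ ((2:ℕ):ℝ)),
          ← Real.rpow_mul hr.le]
        rw [mul_left_comm, ← Real.rpow_add hr]
        norm_num

lemma hardy_lintegral (F G : ℝ → ℝ) (hG : Continuous G)
    (hF : ∀ r, HasDerivAt F (G r) r) (hF0 : F 0 = 0) :
    ∫⁻ r in Ioi (0:ℝ), ENNReal.ofReal (F r ^ 2 / r ^ 2) ≤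
      4 * ∫⁻ t in Ioi (0:ℝ), ENNReal.ofReal (G t ^ 2) := by
  set ψ : ℝ → ℝ≥0∞ := fun t => ENNReal.ofReal (t ^ ((1:ℝ)/2) * G t ^ 2) with hψ
  set w : ℝ → ℝ≥0∞ := fun r => ENNReal.ofReal (2 * r ^ (-(3:ℝ)/2)) with hw
  have hψm : Measurable ψ := ENNReal.measurable_ofReal.comp
    ((measurable_id.pow_const _).mul ((hG.measurable).pow_const _))
  have hwm : Measurable w := ENNReal.measurable_ofReal.comp
    ((measurable_id.pow_const _).const_mul _)
  set Φ : ℝ → ℝ → ℝ≥0∞ := fun r t => if t ≤ r then w r * ψ t else 0 with hΦ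
  have hΦm : Measurable (Function.uncurry Φ) := by
    apply Measurable.ite
    · exact measurableSet_le measurable_snd measurable_fst
    · exact (hwm.comp measurable_fst).mul (hψm.comp measurable_snd)
    · exact measurable_const
  -- step 1 : pointwise bound, rewritten with Φ
  have step1 : ∫⁻ r in Ioi (0:ℝ), ENNReal.ofReal (F r ^ 2 / r ^ 2) ≤
      ∫⁻ r in Ioi (0:ℝ), ∫⁻ t in Ioi (0:ℝ), Φ r t := by
    refine setLIntegral_mono' measurableSet_Ioi fun r hr => ?_
    have hr : (0:ℝ) < r := hr
    have key := hardy_pointwise F G hG hF hF0 hr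
    refine key.trans (le_of_eq ?_)
    have e1 : ∀ t, Φ r t = (Iic r).indicator (fun t => w r * ψ t) t := by
      intro t; simp [hΦ, Set.indicator_apply, Set.mem_Iic]
    calc w r * ∫⁻ t in Ioc (0:ℝ) r, ψ t = ∫⁻ t in Ioc (0:ℝ) r, w r * ψ t :=
          (lintegral_const_mul' _ _ ENNReal.ofReal_ne_top).symm
    _ = ∫⁻ t in Ioi (0:ℝ), (Iic r).indicator (fun t => w r * ψ t) t := by
          rw [lintegral_indicator measurableSet_Iic, Measure.restrict_restrict measurableSet_Iic]
          congr 1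
          rw [Set.Iic_inter_Ioi]
    _ = ∫⁻ t in Ioi (0:ℝ), Φ r t := by
          refine lintegral_congr fun t => (e1 t).symm
  -- step 2 : swap
  have step2 : ∫⁻ r in Ioi (0:ℝ), ∫⁻ t in Ioi (0:ℝ), Φ r t
      = ∫⁻ t in Ioi (0:ℝ), ∫⁻ r in Ioi (0:ℝ), Φ r t := by
    exact lintegral_lintegral_swap hΦm.aemeasurable
  -- step 3 : inner integral computation
  have step3 : ∫⁻ t in Ioi (0:ℝ), ∫⁻ r in Ioi (0:ℝ), Φ r t
      ≤ 4 * ∫⁻ t in Ioi (0:ℝ), ENNReal.ofReal (G t ^ 2) := by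
    rw [← lintegral_const_mul' _ _ (by norm_num : (4:ℝ≥0∞) ≠ ⊤)]
    refine setLIntegral_mono' measurableSet_Ioi fun t ht => ?_
    have ht : (0:ℝ) < t := ht
    have e1 : ∀ r, Φ r t = (Ici t).indicator (fun r => w r * ψ t) r := by
      intro r; simp [hΦ, Set.indicator_apply, Set.mem_Ici]
    calc ∫⁻ r in Ioi (0:ℝ), Φ r t
        = ∫⁻ r in Ioi (0:ℝ), (Ici t).indicator (fun r => w r * ψ t) r :=
          lintegral_congr fun r => e1 r
    _ = ∫⁻ r in Ici t, w r * ψ t := by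
          rw [lintegral_indicator measurableSet_Ici, Measure.restrict_restrict measurableSet_Ici]
          have : Ici t ∩ Ioi 0 = Ici t :=
            Set.inter_eq_left.mpr fun r hr => lt_of_lt_of_le ht hr
          rw [this]
    _ = (∫⁻ r in Ici t, w r) * ψ t := lintegral_mul_const' _ _ ENNReal.ofReal_ne_top
    _ = ENNReal.ofReal (4 * t ^ (-(1:ℝ)/2)) * ψ t := by
          congr 1
          rw [← Measure.restrict_congr_set Ioi_ae_eq_Ici]
          have hint : IntegrableOn (fun r : ℝ => 2 * r ^ (-(3:ℝ)/2)) (Ioi t) :=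
            (integrableOn_Ioi_rpow_of_lt (by norm_num) ht).const_mul 2
          rw [hw, ← ofReal_integral_eq_lintegral_ofReal hint ?_]
          · rw [integral_const_mul, integral_Ioi_rpow_of_lt (by norm_num) ht]
            rw [show (-(3:ℝ)/2 + 1) = -(1/2 : ℝ) by norm_num, Real.rpow_neg ht.le,
              show (-(1:ℝ)/2) = -((1:ℝ)/2) by norm_num, Real.rpow_neg ht.le]
            ring
          · filter_upwards [ae_restrict_mem measurableSet_Ioi] with r hr
            have : (0:ℝ) < r := ht.trans hr
            positivity
    _ = 4 * ENNReal.ofReal (G t ^ 2) := by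
          rw [hψ, ← ENNReal.ofReal_mul (by positivity),
            show (4:ℝ≥0∞) = ENNReal.ofReal (4:ℝ) by norm_num,
            ← ENNReal.ofReal_mul (by norm_num)]
          congr 1
          have h2 : t ^ (-(1:ℝ)/2) * t ^ ((1:ℝ)/2) = 1 := by
            rw [← Real.rpow_add ht]; norm_num
          linear_combination 4 * G t ^ 2 * h2
    _ ≤ 4 * ENNReal.ofReal (G t ^ 2) := le_rfl
  exact step1.trans (step2.trans_le step3)


set_option maxHeartbeats 2000000

/-- **Vertical-difference bound (the term `S₁` in the continuous trace proof).**
There exists `C` depending only on `d` such that for every compactly supported `C¹`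
function `u` on the (closed) half-space `ℝ^{d-1} × [0,∞)` (represented by a compactly
supported `C¹` extension to `ℝ^{d-1} × ℝ`), with `Ω = ℝ^{d-1} × (0,∞)`,
`∫∫ |u(x',0) − u(x',|x'−y'|)|² / |x'−y'|^d dx' dy' ≤ C ∫_Ω |∂_d u|²`. -/
theorem vertical_difference_bound (d : ℕ) (hd : 2 ≤ d) :
    ∃ C : ℝ, 0 < C ∧
      ∀ u : EuclideanSpace ℝ (Fin (d - 1)) × ℝ → ℝ,
        ContDiff ℝ 1 u → HasCompactSupport u →
        (∫ x' : EuclideanSpace ℝ (Fin (d - 1)),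
            ∫ y' : EuclideanSpace ℝ (Fin (d - 1)),
              |u (x', (0 : ℝ)) - u (x', ‖x' - y'‖)| ^ 2 / ‖x' - y'‖ ^ d)
          ≤ C * ∫ p in {p : EuclideanSpace ℝ (Fin (d - 1)) × ℝ | 0 < p.2},
                  |deriv (fun t : ℝ => u (p.1, t)) p.2| ^ 2 := by

  classical
  haveI : Nonempty (Fin (d - 1)) := ⟨⟨0, by omega⟩⟩
  set E := EuclideanSpace ℝ (Fin (d - 1)) with hE
  haveI : Nontrivial E := inferInstance
  set c : ℝ := (d - 1 : ℕ) * (volume (Metric.ball (0 : E) 1)).toReal with hc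
  have hcpos : 0 < c := by
    apply _root_.mul_pos
    · exact_mod_cast Nat.pos_of_ne_zero (by omega)
    · exact ENNReal.toReal_pos (Metric.measure_ball_pos volume _ one_pos).ne'
        measure_ball_lt_top.ne
  refine ⟨4 * c, by positivity, fun u hu hsupp => ?_⟩
  set G : E × ℝ → ℝ := fun p => fderiv ℝ u p (0, 1) with hG
  have hud : Differentiable ℝ u := hu.differentiable one_ne_zero
  have hder : ∀ (x' : E) (t : ℝ), HasDerivAt (fun s : ℝ => u (x', s)) (G (x', t)) t := by
    intro x' t
    have h1 : HasDerivAt (fun s : ℝ => ((x', s) : E × ℝ)) ((0 : E), (1 : ℝ)) t :=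
      (hasDerivAt_const t x').prodMk (hasDerivAt_id t)
    exact (hud (x', t)).hasFDerivAt.comp_hasDerivAt t h1
  have hGc : Continuous G :=
    ((contDiff_one_iff_fderiv.mp hu).2).clm_apply continuous_const
  have hfd : HasCompactSupport (fderiv ℝ u) := hsupp.fderiv ℝ
  have hGsupp : HasCompactSupport G :=
    hfd.comp_left (g := fun L : (E × ℝ) →L[ℝ] ℝ => L (0, 1)) rfl
  have hG2c : Continuous fun p : E × ℝ => G p ^ 2 := hGc.pow 2
  have hG2supp : HasCompactSupport fun p : E × ℝ => G p ^ 2 :=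
    hGsupp.comp_left (g := fun x : ℝ => x ^ 2) (by simp)
  have hG2int : Integrable (fun p : E × ℝ => G p ^ 2) volume :=
    hG2c.integrable_of_hasCompactSupport hG2supp
  -- slice integrability
  have hslice : ∀ x' : E, IntegrableOn (fun t : ℝ => G (x', t) ^ 2) (Set.Ioi 0) := by
    intro x'
    have hc2 : Continuous fun t : ℝ => G (x', t) ^ 2 :=
      hG2c.comp (continuous_const.prodMk continuous_id)
    have hcs : HasCompactSupport fun t : ℝ => G (x', t) ^ 2 := by
      refine HasCompactSupport.intro (hGsupp.image continuous_snd) fun t ht => ?_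
      have hmem : (x', t) ∉ tsupport G := fun hmem => ht ⟨(x', t), hmem, rfl⟩
      simp [image_eq_zero_of_notMem_tsupport hmem]
    exact (hc2.integrable_of_hasCompactSupport hcs).integrableOn
  set J : E → ℝ := fun x' => ∫ t in Set.Ioi (0 : ℝ), G (x', t) ^ 2 with hJ
  have hJnonneg : ∀ x', 0 ≤ J x' := fun x' => integral_nonneg fun t => sq_nonneg _
  have hprodint : Integrable (fun p : E × ℝ => G p ^ 2)
      ((volume : Measure E).prod ((volume : Measure ℝ).restrict (Set.Ioi 0))) := by
    have h2 := Measure.prod_restrict (μ := (volume : Measure E)) (ν := (volume : Measure ℝ))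
      Set.univ (Set.Ioi 0)
    rw [Measure.restrict_univ] at h2
    rw [h2, ← Measure.volume_eq_prod _ _]
    exact hG2int.restrict
  have hJint : Integrable J volume := hprodint.integral_prod_left
  -- RHS rewriting
  have hde : (fun p : E × ℝ => |deriv (fun t : ℝ => u (p.1, t)) p.2| ^ 2)
      = fun p : E × ℝ => G p ^ 2 := by
    funext p
    rw [HasDerivAt.deriv (hder p.1 p.2), sq_abs]
  have hRHS : (∫ p in {p : E × ℝ | 0 < p.2}, |deriv (fun t : ℝ => u (p.1, t)) p.2| ^ 2)
      = ∫ x' : E, J x' := by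
    have hset : {p : E × ℝ | 0 < p.2} = (Set.univ : Set E) ×ˢ Set.Ioi (0 : ℝ) := by
      ext p; simp [Set.mem_prod]
    have hint2 : IntegrableOn (fun p : E × ℝ => G p ^ 2)
        ((Set.univ : Set E) ×ˢ Set.Ioi (0 : ℝ))
        ((volume : Measure E).prod (volume : Measure ℝ)) := by
      rw [← Measure.volume_eq_prod]; exact hG2int.integrableOn
    rw [hde, hset, Measure.volume_eq_prod _ _, setIntegral_prod _ hint2,
      MeasureTheory.setIntegral_univ]
  -- inner (polar) rewriting
  have hinner : ∀ x' : E,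
      (∫ y' : E, |u (x', (0 : ℝ)) - u (x', ‖x' - y'‖)| ^ 2 / ‖x' - y'‖ ^ d)
        = c * ∫ r in Set.Ioi (0 : ℝ), |u (x', (0 : ℝ)) - u (x', r)| ^ 2 / r ^ 2 := by
    intro x'
    have h1 : (∫ y' : E, |u (x', (0 : ℝ)) - u (x', ‖x' - y'‖)| ^ 2 / ‖x' - y'‖ ^ d)
        = ∫ z : E, (fun r : ℝ => |u (x', (0 : ℝ)) - u (x', r)| ^ 2 / r ^ d) ‖z‖ :=
      integral_sub_left_eq_self
        (fun z : E => (fun r : ℝ => |u (x', (0 : ℝ)) - u (x', r)| ^ 2 / r ^ d) ‖z‖) volume x'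
    rw [h1, integral_fun_norm_addHaar volume
      (fun r : ℝ => |u (x', (0 : ℝ)) - u (x', r)| ^ 2 / r ^ d)]
    have h2 : ∫ y in Set.Ioi (0 : ℝ),
          y ^ (Module.finrank ℝ E - 1) • (|u (x', (0 : ℝ)) - u (x', y)| ^ 2 / y ^ d)
        = ∫ r in Set.Ioi (0 : ℝ), |u (x', (0 : ℝ)) - u (x', r)| ^ 2 / r ^ 2 := by
      refine setIntegral_congr_fun measurableSet_Ioi fun y hy => ?_
      have hy : (0 : ℝ) < y := hy
      have hy0 : y ≠ 0 := ne_of_gt hy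
      have hrank : Module.finrank ℝ E = d - 1 := finrank_euclideanSpace_fin
      have hyd : y ^ d = y ^ (Module.finrank ℝ E - 1) * y ^ 2 := by
        rw [← pow_add, hrank]; congr 1; omega
      rw [smul_eq_mul, hyd]
      field_simp
    rw [h2, hc, nsmul_eq_mul, smul_eq_mul, finrank_euclideanSpace_fin, mul_assoc, measureReal_def]
  -- Hardy per slice
  have hHardy : ∀ x' : E,
      (∫ r in Set.Ioi (0 : ℝ), |u (x', (0 : ℝ)) - u (x', r)| ^ 2 / r ^ 2) ≤ 4 * J x' := by
    intro x'
    set F : ℝ → ℝ := fun r => u (x', r) - u (x', 0) with hF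
    have hFd : ∀ r, HasDerivAt F (G (x', r)) r := fun r => (hder x' r).sub_const _
    have hGslice : Continuous fun t : ℝ => G (x', t) :=
      hGc.comp (continuous_const.prodMk continuous_id)
    have key := hardy_lintegral F (fun t => G (x', t)) hGslice hFd (by simp [hF])
    have hnn : ∀ r : ℝ, 0 ≤ |u (x', (0 : ℝ)) - u (x', r)| ^ 2 / r ^ 2 := fun r => by positivity
    have hmeas : AEStronglyMeasurable (fun r : ℝ => |u (x', (0 : ℝ)) - u (x', r)| ^ 2 / r ^ 2)
        (volume.restrict (Set.Ioi 0)) := by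
      apply Measurable.aestronglyMeasurable
      exact (((continuous_const.sub
        (hu.continuous.comp (continuous_const.prodMk continuous_id))).abs.pow 2).measurable).div
        ((continuous_pow 2).measurable)
    rw [integral_eq_lintegral_of_nonneg_ae (ae_of_all _ hnn) hmeas]
    have hcongr : ∫⁻ r in Set.Ioi (0 : ℝ),
          ENNReal.ofReal (|u (x', (0 : ℝ)) - u (x', r)| ^ 2 / r ^ 2)
        = ∫⁻ r in Set.Ioi (0 : ℝ), ENNReal.ofReal (F r ^ 2 / r ^ 2) := by
      refine lintegral_congr fun r => ?_
      congr 1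
      rw [sq_abs, hF]
      ring
    have hJl : ENNReal.ofReal (J x')
        = ∫⁻ t in Set.Ioi (0 : ℝ), ENNReal.ofReal (G (x', t) ^ 2) :=
      ofReal_integral_eq_lintegral_ofReal (hslice x') (ae_of_all _ fun t => sq_nonneg _)
    have hfin : (4 : ℝ≥0∞) * ∫⁻ t in Set.Ioi (0 : ℝ), ENNReal.ofReal (G (x', t) ^ 2) ≠ ⊤ := by
      rw [← hJl]; exact ENNReal.mul_ne_top (by norm_num) ENNReal.ofReal_ne_top
    rw [hcongr]
    calc (∫⁻ r in Set.Ioi (0 : ℝ), ENNReal.ofReal (F r ^ 2 / r ^ 2)).toReal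
        ≤ ((4 : ℝ≥0∞) * ∫⁻ t in Set.Ioi (0 : ℝ), ENNReal.ofReal (G (x', t) ^ 2)).toReal :=
          ENNReal.toReal_mono hfin key
    _ = 4 * J x' := by
        rw [← hJl, ENNReal.toReal_mul, ENNReal.toReal_ofReal (hJnonneg x')]
        norm_num
  -- conclusion
  have heq : (fun x' : E => ∫ y' : E, |u (x', (0 : ℝ)) - u (x', ‖x' - y'‖)| ^ 2 / ‖x' - y'‖ ^ d)
      = fun x' : E => c * ∫ r in Set.Ioi (0 : ℝ), |u (x', (0 : ℝ)) - u (x', r)| ^ 2 / r ^ 2 :=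
    funext hinner
  calc (∫ x' : E, ∫ y' : E, |u (x', (0 : ℝ)) - u (x', ‖x' - y'‖)| ^ 2 / ‖x' - y'‖ ^ d)
      ≤ ∫ x' : E, 4 * c * J x' := by
        rw [heq]
        refine integral_mono_of_nonneg (ae_of_all _ fun x' => ?_) (hJint.const_mul _)
          (ae_of_all _ fun x' => ?_)
        · exact mul_nonneg hcpos.le (integral_nonneg fun r => by positivity)
        · calc c * ∫ r in Set.Ioi (0 : ℝ), |u (x', (0 : ℝ)) - u (x', r)| ^ 2 / r ^ 2
              ≤ c * (4 * J x') := mul_le_mul_of_nonneg_left (hHardy x') hcpos.le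
          _ = 4 * c * J x' := by ring
  _ = 4 * c * ∫ x' : E, J x' := integral_const_mul _ _
  _ = 4 * c * ∫ p in {p : E × ℝ | 0 < p.2}, |deriv (fun t : ℝ => u (p.1, t)) p.2| ^ 2 := by
        rw [hRHS]
end

section
/- Averaged vertical-difference bound: ∫_0^∞ (1/ℓ²) · ( ∫_{ℝ^{d-1}} |u(x',0) − u(x',ℓ)|² dx' ) dℓ ≤ 4 ∫_Ω |∂_d u|², where ∂_d u denotes the partial derivative of u in the last coordinate. -/
open MeasureTheory Set intervalIntegral

/-- Cauchy–Schwarz for set integrals of nonnegative functions. -/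
lemma cs_aux {μ : Measure ℝ} {f g : ℝ → ℝ}
    (hf0 : 0 ≤ᵐ[μ] f) (hg0 : 0 ≤ᵐ[μ] g)
    (hfm : AEStronglyMeasurable f μ) (hgm : AEStronglyMeasurable g μ)
    (hf2 : Integrable (fun x => f x ^ 2) μ) (hg2 : Integrable (fun x => g x ^ 2) μ) :
    ∫ x, f x * g x ∂μ ≤ Real.sqrt (∫ x, f x ^ 2 ∂μ) * Real.sqrt (∫ x, g x ^ 2 ∂μ) := by
  have hpq : (2:ℝ).HolderConjugate 2 := Real.holderConjugate_iff.mpr ⟨by norm_num, by norm_num⟩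
  have h2 : ENNReal.ofReal (2:ℝ) = 2 := by norm_num [ENNReal.ofReal_ofNat]
  have hfL : MemLp f (ENNReal.ofReal (2:ℝ)) μ := by
    rw [h2]; exact (memLp_two_iff_integrable_sq hfm).2 hf2
  have hgL : MemLp g (ENNReal.ofReal (2:ℝ)) μ := by
    rw [h2]; exact (memLp_two_iff_integrable_sq hgm).2 hg2
  have := integral_mul_le_Lp_mul_Lq_of_nonneg hpq hf0 hg0 hfL hgL
  have e1 : ∀ x : ℝ, x ^ (2:ℝ) = x ^ 2 := fun x => by
    rw [show (2:ℝ) = ((2:ℕ):ℝ) by norm_num, Real.rpow_natCast]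
  simp only [e1] at this
  calc ∫ x, f x * g x ∂μ ≤ (∫ x, f x ^ 2 ∂μ) ^ (1/(2:ℝ)) * (∫ x, g x ^ 2 ∂μ) ^ (1/(2:ℝ)) := this
    _ = _ := by rw [← Real.sqrt_eq_rpow, ← Real.sqrt_eq_rpow]

lemma hardy (g : ℝ → ℝ) (hg : Continuous g) (hcs : HasCompactSupport g)
    (hpos : ∀ t, 0 ≤ g t) :
    IntegrableOn (fun ℓ => (1/ℓ^2) * (∫ t in (0:ℝ)..ℓ, g t)^2) (Set.Ioi 0) ∧
    ∫ ℓ in Set.Ioi (0:ℝ), (1/ℓ^2) * (∫ t in (0:ℝ)..ℓ, g t)^2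
      ≤ 4 * ∫ t in Set.Ioi (0:ℝ), (g t)^2 := by
  obtain ⟨M, hM⟩ := hcs.exists_bound_of_continuous hg
  have hM0 : 0 ≤ M := le_trans (norm_nonneg _) (hM 0)
  have hgM : ∀ t, g t ≤ M := fun t => le_trans (le_abs_self _) (hM t)
  set F : ℝ → ℝ := fun ℓ => ∫ t in (0:ℝ)..ℓ, g t with hF
  have hgint : ∀ a b : ℝ, IntervalIntegrable g volume a b := fun a b =>
    hg.intervalIntegrable a b
  have hF0 : ∀ {ℓ : ℝ}, 0 ≤ ℓ → 0 ≤ F ℓ := fun {ℓ} hℓ =>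
    intervalIntegral.integral_nonneg hℓ (fun t _ => hpos t)
  have hFM : ∀ {ℓ : ℝ}, 0 ≤ ℓ → F ℓ ≤ M * ℓ := by
    intro ℓ hℓ
    have : F ℓ ≤ ∫ _t in (0:ℝ)..ℓ, M :=
      intervalIntegral.integral_mono_on hℓ (hgint 0 ℓ) intervalIntegrable_const
        (fun t _ => hgM t)
    simpa [mul_comm] using this
  have hgIoi : IntegrableOn g (Set.Ioi 0) :=
    (hg.integrable_of_hasCompactSupport hcs).integrableOn
  set A : ℝ := ∫ t in Set.Ioi (0:ℝ), g t with hA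
  have hFA : ∀ {ℓ : ℝ}, 0 ≤ ℓ → F ℓ ≤ A := by
    intro ℓ hℓ
    show (∫ t in (0:ℝ)..ℓ, g t) ≤ A
    rw [intervalIntegral.integral_of_le hℓ]
    refine setIntegral_mono_set hgIoi ?_ ?_
    · exact Filter.Eventually.of_forall fun t => hpos t
    · exact Filter.Eventually.of_forall (Set.Ioc_subset_Ioi_self)
  have hFcont : Continuous F := intervalIntegral.continuous_primitive hgint 0
  set φ : ℝ → ℝ := fun ℓ => (1/ℓ^2) * (F ℓ)^2 with hφ
  have hφcont : ContinuousOn φ (Set.Ioi 0) := by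
    apply ContinuousOn.mul
    · exact (continuousOn_const.div (continuous_pow 2).continuousOn
        (fun x hx => pow_ne_zero 2 (ne_of_gt hx)))
    · exact ((hFcont.pow 2).continuousOn)
  have hφ0 : ∀ {ℓ : ℝ}, 0 < ℓ → 0 ≤ φ ℓ := fun {ℓ} hℓ => by positivity
  have hφM : ∀ {ℓ : ℝ}, 0 < ℓ → φ ℓ ≤ M^2 := by
    intro ℓ hℓ
    have h1 : (F ℓ)^2 ≤ (M*ℓ)^2 := pow_le_pow_left₀ (hF0 hℓ.le) (hFM hℓ.le) 2
    have h2 : (1/ℓ^2) * (F ℓ)^2 ≤ (1/ℓ^2) * (M*ℓ)^2 := by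
      apply mul_le_mul_of_nonneg_left h1; positivity
    calc φ ℓ ≤ (1/ℓ^2) * (M*ℓ)^2 := h2
      _ = M^2 := by field_simp
  have hφmeas : AEStronglyMeasurable φ volume := by
    apply Measurable.aestronglyMeasurable
    exact (measurable_const.div ((measurable_id.pow_const 2))).mul
      ((hFcont.pow 2).measurable)
  have hI : IntegrableOn φ (Set.Ioi 0) := by
    have h1 : IntegrableOn φ (Set.Ioc (0:ℝ) 1) := by
      refine Measure.integrableOn_of_bounded (M := M^2) (by simp) hφmeas ?_
      refine (ae_restrict_iff' measurableSet_Ioc).2 (Filter.Eventually.of_forall fun ℓ hℓ => ?_)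
      rw [Real.norm_of_nonneg (hφ0 hℓ.1)]; exact hφM hℓ.1
    have h2 : IntegrableOn φ (Set.Ioi (1:ℝ)) := by
      have hint : IntegrableOn (fun ℓ : ℝ => A^2 * ℓ ^ (-2:ℝ)) (Set.Ioi (1:ℝ)) :=
        (integrableOn_Ioi_rpow_of_lt (by norm_num) one_pos).const_mul _
      apply Integrable.mono' hint hφmeas.restrict
      refine (ae_restrict_iff' measurableSet_Ioi).2 (Filter.Eventually.of_forall fun ℓ hℓ => ?_)
      have hℓ0 : (0:ℝ) < ℓ := lt_trans one_pos hℓ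
      rw [Real.norm_of_nonneg (hφ0 hℓ0)]
      have hsq : (F ℓ)^2 ≤ A^2 := pow_le_pow_left₀ (hF0 hℓ0.le) (hFA hℓ0.le) 2
      have h3 : φ ℓ ≤ (1/ℓ^2) * A^2 := mul_le_mul_of_nonneg_left hsq (by positivity)
      calc φ ℓ ≤ (1/ℓ^2) * A^2 := h3
        _ = A^2 * ℓ ^ (-2:ℝ) := by
            rw [Real.rpow_neg hℓ0.le, show ((2:ℝ)) = ((2:ℕ):ℝ) by norm_num,
              Real.rpow_natCast]
            ring
    have := h1.union h2
    rwa [Set.Ioc_union_Ioi_eq_Ioi zero_le_one] at this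
  have hdivcont : ContinuousOn (fun ℓ => F ℓ / ℓ) (Set.Ioi (0:ℝ)) :=
    hFcont.continuousOn.div continuous_id.continuousOn (fun x hx => ne_of_gt hx)
  have hFgint : IntegrableOn (fun ℓ => (F ℓ / ℓ) * g ℓ) (Set.Ioi 0) := by
    have hint : IntegrableOn (fun ℓ => M * g ℓ) (Set.Ioi (0:ℝ)) := hgIoi.const_mul M
    apply Integrable.mono' hint
      ((hdivcont.mul hg.continuousOn).aestronglyMeasurable measurableSet_Ioi)
    refine (ae_restrict_iff' measurableSet_Ioi).2 (Filter.Eventually.of_forall fun ℓ hℓ => ?_)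
    have h1 : 0 ≤ F ℓ / ℓ := div_nonneg (hF0 (le_of_lt hℓ)) (le_of_lt hℓ)
    simp only [Pi.mul_apply]
    rw [Real.norm_of_nonneg (mul_nonneg h1 (hpos ℓ))]
    have h2 : F ℓ / ℓ ≤ M := (div_le_iff₀ hℓ).2 (by simpa [mul_comm] using hFM (le_of_lt hℓ))
    exact mul_le_mul_of_nonneg_right h2 (hpos ℓ)
  refine ⟨hI, ?_⟩
  set I : ℝ := ∫ ℓ in Set.Ioi (0:ℝ), φ ℓ with hIdef
  set S : ℝ := ∫ ℓ in Set.Ioi (0:ℝ), (F ℓ / ℓ) * g ℓ with hS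
  set J : ℝ := ∫ t in Set.Ioi (0:ℝ), (g t)^2 with hJ
  have hJint : IntegrableOn (fun t => (g t)^2) (Set.Ioi 0) := by
    have : HasCompactSupport (fun t => (g t)^2) := by
      exact hcs.comp_left (g := fun x : ℝ => x ^ 2) (by simp)
    exact ((hg.pow 2).integrable_of_hasCompactSupport this).integrableOn
  have key2 : ∀ ε : ℝ, 0 < ε → ∫ ℓ in Set.Ioi ε, φ ℓ ≤ 2*S + M^2*ε := by
    intro ε hε
    have hIε : IntegrableOn φ (Set.Ioi ε) := hI.mono_set (Set.Ioi_subset_Ioi hε.le)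
    have htend := intervalIntegral_tendsto_integral_Ioi ε hIε (Filter.tendsto_id (x := Filter.atTop))
    refine le_of_tendsto htend ?_
    filter_upwards [Filter.eventually_ge_atTop ε] with R hR
    have hsub : Set.uIcc ε R ⊆ Set.Ioi (0:ℝ) := by
      rw [Set.uIcc_of_le hR]; intro x hx; exact lt_of_lt_of_le hε hx.1
    set h : ℝ → ℝ := fun ℓ => (F ℓ / ℓ) * g ℓ with hh
    have hderiv : ∀ ℓ ∈ Set.uIcc ε R,
        HasDerivAt (fun x => -(F x^2/x)) (φ ℓ - 2*(h ℓ)) ℓ := by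
      intro ℓ hℓ
      have hℓ0 : 0 < ℓ := hsub hℓ
      have hdF : HasDerivAt F (g ℓ) ℓ :=
        intervalIntegral.integral_hasDerivAt_right (hgint 0 ℓ)
          (hg.stronglyMeasurable.stronglyMeasurableAtFilter) hg.continuousAt
      have hdF2 : HasDerivAt (fun x => F x^2) (2*F ℓ*g ℓ) ℓ := by
        have := hdF.fun_pow 2
        refine this.congr_deriv ?_
        push_cast
        ring
      have hd := (hdF2.fun_div (hasDerivAt_id ℓ) (ne_of_gt hℓ0)).fun_neg
      refine hd.congr_deriv ?_
      have hℓ0' : ℓ ≠ 0 := ne_of_gt hℓ0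
      simp only [hφ, hh, id_def]
      field_simp
      ring
    have hcontφ : ContinuousOn φ (Set.uIcc ε R) := hφcont.mono hsub
    have hconth : ContinuousOn h (Set.uIcc ε R) :=
      (hdivcont.mul hg.continuousOn).mono hsub
    have hcontd : ContinuousOn (fun ℓ => φ ℓ - 2*(h ℓ)) (Set.uIcc ε R) :=
      hcontφ.sub (continuousOn_const.mul hconth)
    have heq := intervalIntegral.integral_eq_sub_of_hasDerivAt hderiv
      (hcontd.intervalIntegrable)
    have hiiφ : IntervalIntegrable φ volume ε R := hcontφ.intervalIntegrable
    have hiih : IntervalIntegrable h volume ε R := hconth.intervalIntegrable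
    have hsplit : ∫ ℓ in ε..R, φ ℓ = (∫ ℓ in ε..R, (φ ℓ - 2*(h ℓ))) + 2 * ∫ ℓ in ε..R, h ℓ := by
      rw [intervalIntegral.integral_sub hiiφ ((hiih.const_mul 2)),
        intervalIntegral.integral_const_mul]
      ring
    have hεR : 0 < R := lt_of_lt_of_le hε hR
    have hb1 : (∫ ℓ in ε..R, (φ ℓ - 2*(h ℓ))) ≤ M^2*ε := by
      rw [heq]
      have h1 : 0 ≤ F R ^ 2 / R := div_nonneg (sq_nonneg _) hεR.le
      have h2 : F ε ^ 2 / ε ≤ M^2*ε := by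
        rw [div_le_iff₀ hε]
        have : F ε ^ 2 ≤ (M*ε)^2 := pow_le_pow_left₀ (hF0 hε.le) (hFM hε.le) 2
        calc F ε ^2 ≤ (M*ε)^2 := this
          _ = M^2*ε*ε := by ring
      linarith
    have hb2 : (∫ ℓ in ε..R, h ℓ) ≤ S := by
      rw [intervalIntegral.integral_of_le hR]
      refine setIntegral_mono_set hFgint ?_ ?_
      · refine (ae_restrict_iff' measurableSet_Ioi).2 (Filter.Eventually.of_forall fun ℓ hℓ => ?_)
        exact mul_nonneg (div_nonneg (hF0 hℓ.le) hℓ.le) (hpos ℓ)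
      · refine Filter.Eventually.of_forall fun x hx => lt_trans hε hx.1
    calc ∫ ℓ in ε..R, φ ℓ = _ := hsplit
      _ ≤ M^2*ε + 2*S := by linarith
      _ = 2*S + M^2*ε := by ring
  have key3 : I ≤ 2*S := by
    by_contra hcon
    push_neg at hcon
    set ε : ℝ := (I - 2*S) / (2*(2*M^2+1)) with hεdef
    have hε0 : 0 < ε := by
      apply div_pos (by linarith) (by positivity)
    have hsplit : I = (∫ ℓ in Set.Ioc (0:ℝ) ε, φ ℓ) + ∫ ℓ in Set.Ioi ε, φ ℓ := by
      rw [hIdef, ← setIntegral_union (Set.Ioc_disjoint_Ioi le_rfl) measurableSet_Ioi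
        (hI.mono_set Set.Ioc_subset_Ioi_self) (hI.mono_set (Set.Ioi_subset_Ioi hε0.le)),
        Set.Ioc_union_Ioi_eq_Ioi hε0.le]
    have h1 : (∫ ℓ in Set.Ioc (0:ℝ) ε, φ ℓ) ≤ M^2 * ε := by
      have hle : (∫ ℓ in Set.Ioc (0:ℝ) ε, φ ℓ) ≤ ∫ _ℓ in Set.Ioc (0:ℝ) ε, M^2 :=
        setIntegral_mono_on (hI.mono_set Set.Ioc_subset_Ioi_self)
          (integrableOn_const (by simp [hε0.le]))
          measurableSet_Ioc (fun ℓ hℓ => hφM hℓ.1)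
      have : (∫ _ℓ in Set.Ioc (0:ℝ) ε, (M^2:ℝ)) = M^2 * ε := by
        simp [Real.volume_Ioc, ENNReal.toReal_ofReal hε0.le, mul_comm, hε0.le]
      linarith [hle, this.le, this.ge]
    have h2 := key2 ε hε0
    have hfinal : I ≤ 2*S + 2*M^2*ε := by
      rw [hsplit]; linarith
    have hbound : 2*M^2*ε < I - 2*S := by
      rw [hεdef]
      rw [div_eq_inv_mul, ← mul_assoc]
      have hlt : 2*M^2 * (2*(2*M^2+1))⁻¹ < 1 := by
        rw [mul_inv_lt_iff₀ (by positivity)]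
        nlinarith [sq_nonneg M]
      nlinarith [hlt, sub_pos.2 hcon]
    linarith
  have hI0 : 0 ≤ I := setIntegral_nonneg measurableSet_Ioi fun ℓ hℓ => hφ0 hℓ
  have hJ0 : 0 ≤ J := setIntegral_nonneg measurableSet_Ioi fun ℓ _ => sq_nonneg _
  have hae : ∀ᵐ ℓ ∂(volume.restrict (Set.Ioi (0:ℝ))), φ ℓ = (F ℓ / ℓ)^2 := by
    refine (ae_restrict_iff' measurableSet_Ioi).2 (Filter.Eventually.of_forall fun ℓ hℓ => ?_)
    have : (ℓ:ℝ) ≠ 0 := ne_of_gt hℓ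
    simp only [hφ]
    field_simp
  have hCS : S ≤ Real.sqrt I * Real.sqrt J := by
    have hfm : AEStronglyMeasurable (fun ℓ => F ℓ / ℓ) (volume.restrict (Set.Ioi (0:ℝ))) :=
      hdivcont.aestronglyMeasurable measurableSet_Ioi
    have hf0 : 0 ≤ᵐ[volume.restrict (Set.Ioi (0:ℝ))] (fun ℓ => F ℓ / ℓ) :=
      (ae_restrict_iff' measurableSet_Ioi).2 (Filter.Eventually.of_forall fun ℓ hℓ =>
        div_nonneg (hF0 hℓ.le) hℓ.le)
    have hg0 : 0 ≤ᵐ[volume.restrict (Set.Ioi (0:ℝ))] g :=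
      Filter.Eventually.of_forall hpos
    have hf2 : Integrable (fun ℓ => (F ℓ / ℓ)^2) (volume.restrict (Set.Ioi (0:ℝ))) :=
      hI.congr hae
    have hIeq : I = ∫ ℓ in Set.Ioi (0:ℝ), (F ℓ / ℓ)^2 := integral_congr_ae hae
    have := cs_aux hf0 hg0 hfm (hg.aestronglyMeasurable.restrict) hf2 hJint
    rw [hS, hIeq]
    exact this
  -- conclude
  have hI' : I ≤ 2 * (Real.sqrt I * Real.sqrt J) := le_trans key3 (by linarith)
  have ha : Real.sqrt I ^ 2 = I := Real.sq_sqrt hI0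
  have hb : Real.sqrt J ^ 2 = J := Real.sq_sqrt hJ0
  nlinarith [Real.sqrt_nonneg I, Real.sqrt_nonneg J,
    sq_nonneg (Real.sqrt I - 2 * Real.sqrt J)]

/-- **Averaged vertical-difference bound.** For a compactly supported `C¹` function `u`
on the (closed) half-space `ℝ^{d-1} × [0,∞)` (represented by a compactly supported `C¹`
extension to `ℝ^{d-1} × ℝ`), with `Ω = ℝ^{d-1} × (0,∞)`,
`∫_0^∞ (1/ℓ²) ( ∫_{ℝ^{d-1}} |u(x',0) − u(x',ℓ)|² dx' ) dℓ ≤ 4 ∫_Ω |∂_d u|²`. -/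
theorem averaged_vertical_difference_bound (d : ℕ) (hd : 2 ≤ d)
    (u : EuclideanSpace ℝ (Fin (d - 1)) × ℝ → ℝ)
    (hu : ContDiff ℝ 1 u) (hsupp : HasCompactSupport u) :
    (∫ ℓ in Set.Ioi (0 : ℝ),
        (1 / ℓ ^ 2) *
          ∫ x' : EuclideanSpace ℝ (Fin (d - 1)), |u (x', (0 : ℝ)) - u (x', ℓ)| ^ 2)
      ≤ 4 * ∫ p in {p : EuclideanSpace ℝ (Fin (d - 1)) × ℝ | 0 < p.2},
              |deriv (fun t : ℝ => u (p.1, t)) p.2| ^ 2 := by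
  have hDerivAt : ∀ (x' : EuclideanSpace ℝ (Fin (d - 1))) (t : ℝ),
      HasDerivAt (fun s => u (x', s)) (fderiv ℝ u (x', t) (0, 1)) t := by
    intro x' t
    have h1 : HasFDerivAt u (fderiv ℝ u (x', t)) (x', t) :=
      (hu.differentiable one_ne_zero (x', t)).hasFDerivAt
    have h2 : HasDerivAt (fun s : ℝ => ((x', s) : EuclideanSpace ℝ (Fin (d - 1)) × ℝ))
        ((0 : EuclideanSpace ℝ (Fin (d - 1))), (1 : ℝ)) t :=
      (hasDerivAt_const t x').prodMk (hasDerivAt_id t)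
    exact h1.comp_hasDerivAt t h2
  have hDeq : ∀ p : EuclideanSpace ℝ (Fin (d - 1)) × ℝ,
      deriv (fun t : ℝ => u (p.1, t)) p.2 = fderiv ℝ u p (0, 1) := fun p =>
    (hDerivAt p.1 p.2).deriv
  set G : EuclideanSpace ℝ (Fin (d - 1)) × ℝ → ℝ := fun p => |fderiv ℝ u p (0, 1)| with hGdef
  have hDcont : Continuous fun p : EuclideanSpace ℝ (Fin (d - 1)) × ℝ =>
      fderiv ℝ u p (0, 1) := (hu.continuous_fderiv one_ne_zero).clm_apply continuous_const
  have hGcont : Continuous G := hDcont.abs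
  have hGsupp : HasCompactSupport G := by
    have h1 : HasCompactSupport (fderiv ℝ u) := hsupp.fderiv (𝕜 := ℝ)
    have h2 : HasCompactSupport fun p => fderiv ℝ u p (0, 1) :=
      h1.comp_left (g := fun L : (EuclideanSpace ℝ (Fin (d - 1)) × ℝ) →L[ℝ] ℝ => L (0, 1))
        (by simp)
    exact h2.comp_left (g := abs) abs_zero
  have hG0 : ∀ p, 0 ≤ G p := fun p => abs_nonneg _
  have hG2int : Integrable (fun p => G p ^ 2) volume :=
    (hGcont.fun_pow 2).integrable_of_hasCompactSupport
      (hGsupp.comp_left (g := fun x : ℝ => x ^ 2) (by simp))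
  have hslice : ∀ x', HasCompactSupport fun t => G (x', t) := by
    intro x'
    refine HasCompactSupport.intro (hGsupp.image continuous_snd) fun t ht => ?_
    by_contra h0
    exact ht ⟨(x', t), subset_tsupport _ h0, rfl⟩
  have hFTC : ∀ (x' : EuclideanSpace ℝ (Fin (d - 1))) {ℓ : ℝ}, 0 ≤ ℓ →
      |u (x', (0 : ℝ)) - u (x', ℓ)| ≤ ∫ t in (0 : ℝ)..ℓ, G (x', t) := by
    intro x' ℓ hℓ
    have hcont1 : Continuous fun t : ℝ => fderiv ℝ u (x', t) (0, 1) :=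
      hDcont.comp (Continuous.prodMk_right x')
    have hint : IntervalIntegrable (fun t => fderiv ℝ u (x', t) (0, 1)) volume 0 ℓ :=
      hcont1.intervalIntegrable 0 ℓ
    have heq := intervalIntegral.integral_eq_sub_of_hasDerivAt
      (f := fun s => u (x', s)) (f' := fun t => fderiv ℝ u (x', t) (0, 1))
      (fun t _ => hDerivAt x' t) hint
    rw [abs_sub_comm]
    calc |u (x', ℓ) - u (x', (0:ℝ))|
        = |∫ t in (0 : ℝ)..ℓ, fderiv ℝ u (x', t) (0, 1)| := by rw [heq]
      _ ≤ ∫ t in (0 : ℝ)..ℓ, |fderiv ℝ u (x', t) (0, 1)| :=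
          intervalIntegral.abs_integral_le_integral_abs hℓ
      _ = ∫ t in (0 : ℝ)..ℓ, G (x', t) := rfl
  have hW : ∀ x' : EuclideanSpace ℝ (Fin (d - 1)),
      (∫ ℓ in Set.Ioi (0 : ℝ), (1 / ℓ ^ 2) * |u (x', (0 : ℝ)) - u (x', ℓ)| ^ 2)
        ≤ 4 * ∫ t in Set.Ioi (0 : ℝ), G (x', t) ^ 2 := by
    intro x'
    obtain ⟨hint, hineq⟩ := hardy (fun t => G (x', t))
      (hGcont.comp (Continuous.prodMk_right x')) (hslice x') (fun t => hG0 _)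
    refine le_trans (integral_mono_of_nonneg ?_ hint ?_) hineq
    · exact Filter.Eventually.of_forall fun ℓ => by positivity
    · refine (ae_restrict_iff' measurableSet_Ioi).2 (Filter.Eventually.of_forall fun ℓ hℓ => ?_)
      have h2 : |u (x', (0:ℝ)) - u (x', ℓ)| ^ 2 ≤ (∫ t in (0 : ℝ)..ℓ, G (x', t)) ^ 2 :=
        pow_le_pow_left₀ (abs_nonneg _) (hFTC x' hℓ.le) 2
      exact mul_le_mul_of_nonneg_left h2 (by positivity)
  -- joint integrability of the left-hand side
  obtain ⟨Mu, hMu⟩ := hsupp.exists_bound_of_continuous hu.continuous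
  have hMu0 : 0 ≤ Mu := le_trans (norm_nonneg _) (hMu ((0 : EuclideanSpace ℝ (Fin (d - 1))), (0:ℝ)))
  obtain ⟨L, hL⟩ := hu.lipschitzWith_of_hasCompactSupport hsupp one_ne_zero
  set K1 : Set (EuclideanSpace ℝ (Fin (d - 1))) := Prod.fst '' tsupport u with hK1def
  have hK1c : IsCompact K1 := hsupp.image continuous_fst
  have huK1 : ∀ x', x' ∉ K1 → ∀ s : ℝ, u (x', s) = 0 := by
    intro x' hx' s
    by_contra h0
    exact hx' ⟨(x', s), subset_tsupport _ h0, rfl⟩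
  have hΔL : ∀ (x' : EuclideanSpace ℝ (Fin (d - 1))) (ℓ : ℝ),
      |u (x', (0:ℝ)) - u (x', ℓ)| ≤ (L : ℝ) * |ℓ| := by
    intro x' ℓ
    have h1 := hL.dist_le_mul (x', (0:ℝ)) (x', ℓ)
    rw [Real.dist_eq] at h1
    refine le_trans h1 (mul_le_mul_of_nonneg_left ?_ L.coe_nonneg)
    rw [Prod.dist_eq]
    simp [Real.dist_eq, abs_sub_comm]
  have hΔMu : ∀ (x' : EuclideanSpace ℝ (Fin (d - 1))) (ℓ : ℝ),
      |u (x', (0:ℝ)) - u (x', ℓ)| ≤ 2 * Mu := by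
    intro x' ℓ
    calc |u (x', (0:ℝ)) - u (x', ℓ)| ≤ |u (x', (0:ℝ))| + |u (x', ℓ)| := abs_sub _ _
      _ ≤ 2 * Mu := by
          have h1 := hMu (x', (0:ℝ)); have h2 := hMu (x', ℓ)
          rw [Real.norm_eq_abs] at h1 h2; linarith
  set c : ℝ → ℝ := fun ℓ => min ((L:ℝ) ^ 2) ((2 * Mu) ^ 2 / ℓ ^ 2) with hcdef
  have hc0 : ∀ ℓ : ℝ, 0 ≤ c ℓ := fun ℓ => le_min (by positivity) (by positivity)
  have hcmeas : Measurable c :=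
    measurable_const.min (measurable_const.div ((measurable_id.pow_const 2)))
  have hcint : IntegrableOn c (Set.Ioi 0) := by
    have h1 : IntegrableOn c (Set.Ioc (0:ℝ) 1) := by
      refine Measure.integrableOn_of_bounded (M := (L:ℝ)^2) (by simp)
        hcmeas.aestronglyMeasurable ?_
      refine (ae_restrict_iff' measurableSet_Ioc).2 (Filter.Eventually.of_forall fun ℓ hℓ => ?_)
      rw [Real.norm_of_nonneg (hc0 ℓ)]; exact min_le_left _ _
    have h2 : IntegrableOn c (Set.Ioi (1:ℝ)) := by
      have hint : IntegrableOn (fun ℓ : ℝ => (2*Mu)^2 * ℓ ^ (-2:ℝ)) (Set.Ioi (1:ℝ)) :=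
        (integrableOn_Ioi_rpow_of_lt (by norm_num) one_pos).const_mul _
      apply Integrable.mono' hint hcmeas.aestronglyMeasurable.restrict
      refine (ae_restrict_iff' measurableSet_Ioi).2 (Filter.Eventually.of_forall fun ℓ hℓ => ?_)
      have hℓ0 : (0:ℝ) < ℓ := lt_trans one_pos hℓ
      rw [Real.norm_of_nonneg (hc0 ℓ)]
      calc c ℓ ≤ (2*Mu)^2 / ℓ^2 := min_le_right _ _
        _ = (2*Mu)^2 * ℓ ^ (-2:ℝ) := by
            rw [Real.rpow_neg hℓ0.le, show ((2:ℝ)) = ((2:ℕ):ℝ) by norm_num,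
              Real.rpow_natCast]
            ring
    have := h1.union h2
    rwa [Set.Ioc_union_Ioi_eq_Ioi zero_le_one] at this
  have hK1meas : MeasurableSet K1 := hK1c.isClosed.measurableSet
  have hindint : Integrable (Set.indicator K1 (fun _ => (1:ℝ))) volume := by
    rw [integrable_indicator_iff hK1meas]
    exact integrableOn_const hK1c.measure_lt_top.ne
  have hjoint : Integrable
      (Function.uncurry fun (ℓ : ℝ) (x' : EuclideanSpace ℝ (Fin (d - 1))) =>
        (1 / ℓ ^ 2) * |u (x', (0:ℝ)) - u (x', ℓ)| ^ 2)
      ((volume.restrict (Set.Ioi 0)).prod volume) := by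
    have hbnd : Integrable
        (fun z : ℝ × EuclideanSpace ℝ (Fin (d - 1)) =>
          c z.1 * Set.indicator K1 (fun _ => (1:ℝ)) z.2)
        ((volume.restrict (Set.Ioi 0)).prod volume) :=
      Integrable.mul_prod hcint hindint
    refine hbnd.mono' ?_ ?_
    · apply Measurable.aestronglyMeasurable
      have h1 : Measurable fun z : ℝ × EuclideanSpace ℝ (Fin (d - 1)) => 1 / z.1 ^ 2 :=
        measurable_const.div (measurable_fst.pow_const 2)
      have h2 : Continuous fun z : ℝ × EuclideanSpace ℝ (Fin (d - 1)) =>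
          |u (z.2, (0:ℝ)) - u (z.2, z.1)| ^ 2 := by
        apply Continuous.pow
        apply Continuous.abs
        exact (hu.continuous.comp (continuous_snd.prodMk continuous_const)).sub
          (hu.continuous.comp (continuous_snd.prodMk continuous_fst))
      exact h1.mul h2.measurable
    · have hprodeq : (volume.restrict (Set.Ioi (0:ℝ))).prod
          (volume : Measure (EuclideanSpace ℝ (Fin (d - 1)))) =
          ((volume.prod volume)).restrict ((Set.Ioi (0:ℝ)) ×ˢ Set.univ) := by
        rw [← Measure.prod_restrict, Measure.restrict_univ]
      rw [hprodeq]
      refine (ae_restrict_iff' (measurableSet_Ioi.prod MeasurableSet.univ)).2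
        (Filter.Eventually.of_forall fun z hz => ?_)
      have hℓ0 : (0:ℝ) < z.1 := hz.1
      by_cases hx : z.2 ∈ K1
      · rw [Set.indicator_of_mem hx, mul_one, Function.uncurry]
        rw [Real.norm_of_nonneg (by positivity)]
        refine le_min ?_ ?_
        · have h1 : |u (z.2, (0:ℝ)) - u (z.2, z.1)| ^ 2 ≤ ((L:ℝ) * |z.1|) ^ 2 :=
            pow_le_pow_left₀ (abs_nonneg _) (hΔL z.2 z.1) 2
          have h2 : (1 / z.1 ^ 2) * |u (z.2, (0:ℝ)) - u (z.2, z.1)| ^ 2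
              ≤ (1 / z.1 ^ 2) * ((L:ℝ) * |z.1|) ^ 2 :=
            mul_le_mul_of_nonneg_left h1 (by positivity)
          refine le_trans h2 (le_of_eq ?_)
          rw [mul_pow, sq_abs]
          field_simp
        · have h1 : |u (z.2, (0:ℝ)) - u (z.2, z.1)| ^ 2 ≤ (2*Mu) ^ 2 :=
            pow_le_pow_left₀ (abs_nonneg _) (hΔMu z.2 z.1) 2
          have h2 : (1 / z.1 ^ 2) * |u (z.2, (0:ℝ)) - u (z.2, z.1)| ^ 2
              ≤ (1 / z.1 ^ 2) * (2*Mu) ^ 2 :=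
            mul_le_mul_of_nonneg_left h1 (by positivity)
          refine le_trans h2 (le_of_eq (by ring))
      · rw [Set.indicator_of_notMem hx, mul_zero, Function.uncurry]
        simp [huK1 z.2 hx]
  have hswap : (∫ ℓ in Set.Ioi (0 : ℝ),
        (1 / ℓ ^ 2) *
          ∫ x' : EuclideanSpace ℝ (Fin (d - 1)), |u (x', (0 : ℝ)) - u (x', ℓ)| ^ 2)
      = ∫ x' : EuclideanSpace ℝ (Fin (d - 1)),
          ∫ ℓ in Set.Ioi (0 : ℝ), (1 / ℓ ^ 2) * |u (x', (0 : ℝ)) - u (x', ℓ)| ^ 2 := by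
    rw [← integral_integral_swap hjoint]
    exact MeasureTheory.integral_congr_ae (Filter.Eventually.of_forall fun ℓ =>
      (MeasureTheory.integral_const_mul _ _).symm)
  rw [hswap]
  have hRHSeq : (∫ p in {p : EuclideanSpace ℝ (Fin (d - 1)) × ℝ | 0 < p.2},
        |deriv (fun t : ℝ => u (p.1, t)) p.2| ^ 2)
      = ∫ x' : EuclideanSpace ℝ (Fin (d - 1)), ∫ t in Set.Ioi (0:ℝ), G (x', t) ^ 2 := by
    have hset : {p : EuclideanSpace ℝ (Fin (d - 1)) × ℝ | 0 < p.2}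
        = Set.univ ×ˢ Set.Ioi (0:ℝ) := by
      ext p; simp [Set.mem_prod]
    have hfun : (fun p : EuclideanSpace ℝ (Fin (d - 1)) × ℝ =>
        |deriv (fun t : ℝ => u (p.1, t)) p.2| ^ 2) = fun p => G p ^ 2 := by
      funext p; rw [hDeq p]
    rw [hset, show (∫ p in Set.univ ×ˢ Set.Ioi (0:ℝ),
        |deriv (fun t : ℝ => u (p.1, t)) p.2| ^ 2) = ∫ p in Set.univ ×ˢ Set.Ioi (0:ℝ),
        G p ^ 2 from by rw [hfun]]
    calc ∫ p in Set.univ ×ˢ Set.Ioi (0:ℝ), G p ^ 2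
        = ∫ x' in (Set.univ : Set (EuclideanSpace ℝ (Fin (d - 1)))),
            ∫ t in Set.Ioi (0:ℝ), G (x', t) ^ 2 :=
          setIntegral_prod (fun p => G p ^ 2) (hG2int.integrableOn)
      _ = _ := by rw [Measure.restrict_univ]
  rw [hRHSeq, ← MeasureTheory.integral_const_mul]
  have hmarg : Integrable (fun x' : EuclideanSpace ℝ (Fin (d - 1)) =>
      ∫ t in Set.Ioi (0:ℝ), G (x', t) ^ 2) volume := by
    have h1 : Integrable (fun p => G p ^ 2)
        ((volume : Measure (EuclideanSpace ℝ (Fin (d - 1)))).prod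
          (volume.restrict (Set.Ioi 0))) := by
      rw [show (volume : Measure (EuclideanSpace ℝ (Fin (d - 1)))).prod
          (volume.restrict (Set.Ioi (0:ℝ)))
          = ((volume.prod volume)).restrict (Set.univ ×ˢ Set.Ioi (0:ℝ)) from by
        rw [← Measure.prod_restrict, Measure.restrict_univ]]
      exact hG2int.restrict
    exact h1.integral_prod_left
  apply integral_mono_of_nonneg
  · refine Filter.Eventually.of_forall fun x' => ?_
    exact setIntegral_nonneg measurableSet_Ioi fun ℓ hℓ => by positivity
  · exact hmarg.const_mul 4
  · exact Filter.Eventually.of_forall fun x' => hW x'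
end

section
/- Horizontal-difference bound (estimate of the term S₂ in the continuous trace proof): there exists a constant C depending only on d such that ∫_{ℝ^{d-1}} ∫_{ℝ^{d-1}} |u(x', |x'−y'|) − u(y', |x'−y'|)|² / |x'−y'|^d dx' dy' ≤ C ∫_Ω |∇_{x'} u|², where ∇_{x'} u denotes the gradient of u with respect to the first d−1 coordinates. -/
open MeasureTheory Set Metric Module
set_option maxHeartbeats 1000000
open scoped ENNReal

lemma sq_lintegral_le_lintegral_sq {α : Type*} [MeasurableSpace α] (ν : Measure α)
    [IsProbabilityMeasure ν] (f : α → ℝ≥0∞) (hf : AEMeasurable f ν) :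
    (∫⁻ x, f x ∂ν) ^ 2 ≤ ∫⁻ x, f x ^ 2 ∂ν := by
  have hpq : (2:ℝ).HolderConjugate 2 := Real.HolderConjugate.two_two
  have h := ENNReal.lintegral_mul_le_Lp_mul_Lq ν hpq hf (aemeasurable_const (b := (1:ℝ≥0∞)))
  simp only [Pi.mul_apply, mul_one, ENNReal.one_rpow, lintegral_const, measure_univ,
    one_mul, ENNReal.one_rpow] at h
  calc (∫⁻ x, f x ∂ν) ^ 2 ≤ ((∫⁻ x, f x ^ (2:ℝ) ∂ν) ^ (1/(2:ℝ))) ^ 2 := pow_le_pow_left' h 2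
  _ = ∫⁻ x, f x ^ 2 ∂ν := by
      rw [← ENNReal.rpow_natCast (((∫⁻ x, f x ^ (2:ℝ) ∂ν) ^ (1/(2:ℝ)))) 2,
        ← ENNReal.rpow_mul]
      norm_num

local notation "dim" => Module.finrank ℝ

lemma lintegral_fun_norm_addHaar' {E : Type*} [NormedAddCommGroup E] [NormedSpace ℝ E]
    [MeasurableSpace E] [BorelSpace E] [FiniteDimensional ℝ E] [Nontrivial E]
    (μ : Measure E) [μ.IsAddHaarMeasure] (f : ℝ → ℝ≥0∞) (hf : Measurable f) :
    ∫⁻ x, f ‖x‖ ∂μ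
      = (dim E) * μ (ball 0 1) * ∫⁻ y in Ioi (0:ℝ), ENNReal.ofReal (y ^ (dim E - 1)) * f y := by
  have h1 : ∫⁻ x, f ‖x‖ ∂μ = ∫⁻ x : ({(0:E)}ᶜ : Set E), f ‖(x:E)‖ ∂(μ.comap (↑)) := by
    rw [lintegral_subtype_comap (measurableSet_singleton (0:E)).compl (fun x => f ‖x‖),
      MeasureTheory.restrict_compl_singleton (0:E)]
  have h2 : ∫⁻ x : ({(0:E)}ᶜ : Set E), f ‖(x:E)‖ ∂(μ.comap (↑))
      = ∫⁻ p : sphere (0:E) 1 × Ioi (0:ℝ), f p.2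
          ∂(μ.toSphere.prod (.volumeIoiPow (dim E - 1))) := by
    rw [← μ.measurePreserving_homeomorphUnitSphereProd.lintegral_comp
      (f := fun p : sphere (0:E) 1 × Ioi (0:ℝ) => f p.2)
      (((hf.comp measurable_subtype_coe).comp measurable_snd))]
    simp only [homeomorphUnitSphereProd_apply_snd_coe]
  have h3 : ∫⁻ p : sphere (0:E) 1 × Ioi (0:ℝ), f p.2
        ∂(μ.toSphere.prod (.volumeIoiPow (dim E - 1)))
      = μ.toSphere univ * ∫⁻ r : Ioi (0:ℝ), f r ∂(Measure.volumeIoiPow (dim E - 1)) := by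
    rw [lintegral_prod (fun p : sphere (0:E) 1 × Ioi (0:ℝ) => f ↑p.2)
      (((hf.comp measurable_subtype_coe).comp measurable_snd).aemeasurable)]
    simp [lintegral_const]
    rw [mul_comm]
  have h4 : ∫⁻ r : Ioi (0:ℝ), f r ∂(Measure.volumeIoiPow (dim E - 1))
      = ∫⁻ y in Ioi (0:ℝ), ENNReal.ofReal (y ^ (dim E - 1)) * f y := by
    have hw : Measurable (fun r : Ioi (0:ℝ) => ENNReal.ofReal ((r:ℝ) ^ (dim E - 1))) :=
      (measurable_subtype_coe.pow_const _).ennreal_ofReal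
    have hg : Measurable (fun r : Ioi (0:ℝ) => f ↑r) := hf.comp measurable_subtype_coe
    rw [Measure.volumeIoiPow,
      lintegral_withDensity_eq_lintegral_mul (Measure.comap Subtype.val volume) hw hg]
    have := lintegral_subtype_comap (μ := (volume : Measure ℝ)) (measurableSet_Ioi (a := (0:ℝ)))
      (fun a : ℝ => ENNReal.ofReal (a ^ (dim E - 1)) * f a)
    rw [← this]
    rfl
  rw [h1, h2, h3, h4, μ.toSphere_apply_univ, mul_assoc]

lemma lintegral_comp_smul' {E : Type*} [NormedAddCommGroup E] [NormedSpace ℝ E]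
    [MeasurableSpace E] [BorelSpace E] [FiniteDimensional ℝ E]
    (μ : Measure E) [μ.IsAddHaarMeasure] (f : E → ℝ≥0∞) (hf : Measurable f) {t : ℝ}
    (ht : t ≠ 0) :
    ∫⁻ x, f (t • x) ∂μ = ENNReal.ofReal (|(t ^ (dim E))⁻¹|) * ∫⁻ x, f x ∂μ := by
  rw [← smul_eq_mul, ← lintegral_smul_measure, ← Measure.map_addHaar_smul μ ht,
    lintegral_map hf (measurable_const_smul t)]


section AuxMain

variable {E : Type*} [NormedAddCommGroup E] [NormedSpace ℝ E] [MeasureSpace E]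
  [BorelSpace E] [FiniteDimensional ℝ E] [Nontrivial E]
  [(volume : Measure E).IsAddHaarMeasure]

lemma horiz_aux (k : ℕ) (hk : k = finrank ℝ E + 1)
    (u : E × ℝ → ℝ) (hu : ContDiff ℝ 1 u) (hcs : HasCompactSupport u) :
    (∫ x : E, ∫ y : E, |u (x, ‖x - y‖) - u (y, ‖x - y‖)| ^ 2 / ‖x - y‖ ^ k)
      ≤ ((finrank ℝ E : ℝ≥0∞) * volume (ball (0 : E) 1)).toReal *
        ∫ p in {p : E × ℝ | 0 < p.2}, ‖fderiv ℝ (fun z : E => u (z, p.2)) p.1‖ ^ 2 := by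
  set m := finrank ℝ E with hm
  have hm1 : 1 ≤ m := Module.finrank_pos
  have hk2 : 2 ≤ k := by omega
  haveI : ProperSpace E := FiniteDimensional.proper ℝ E
  haveI : SigmaFinite (volume : Measure E) := by infer_instance
  haveI : IsProbabilityMeasure (volume.restrict (Ioc (0:ℝ) 1)) := ⟨by simp [Real.volume_Ioc]⟩
  -- the partial derivative in the first variable
  have hud : Differentiable ℝ u := hu.differentiable one_ne_zero
  set D : E × ℝ → (E →L[ℝ] ℝ) := fun p => (fderiv ℝ u p).comp (ContinuousLinearMap.inl ℝ E ℝ)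
    with hD
  have hDcont : Continuous D := (hu.continuous_fderiv one_ne_zero).clm_comp continuous_const
  have hpd : ∀ (z : E) (s : ℝ), HasFDerivAt (fun w => u (w, s)) (D (z, s)) z := by
    intro z s
    exact (hud (z, s)).hasFDerivAt.comp z (hasFDerivAt_prodMk_left z s)
  have hfd : ∀ (z : E) (s : ℝ), fderiv ℝ (fun w => u (w, s)) z = D (z, s) :=
    fun z s => (hpd z s).fderiv
  set H : E × ℝ → ℝ := fun p => ‖D p‖ ^ 2 with hH
  have hHcont : Continuous H := (hDcont.norm).pow 2
  have hHnn : ∀ p, 0 ≤ H p := fun p => sq_nonneg _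
  have hHcs : HasCompactSupport H := by
    have h0 : HasCompactSupport (fderiv ℝ u) := hcs.fderiv ℝ
    exact h0.comp_left (g := fun L : (E × ℝ) →L[ℝ] ℝ => ‖L.comp (ContinuousLinearMap.inl ℝ E ℝ)‖ ^ 2)
      (by simp)
  -- constants and main ENNReal quantities
  set c : ℝ≥0∞ := (m : ℝ≥0∞) * volume (ball (0 : E) 1) with hc
  set R : ℝ≥0∞ := ∫⁻ z : E, ∫⁻ s in Ioi (0:ℝ), ENNReal.ofReal (H (z, s)) with hR
  set f2 : E → E → ℝ := fun x y => |u (x, ‖x - y‖) - u (y, ‖x - y‖)| ^ 2 / ‖x - y‖ ^ k with hf2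
  set L : ℝ≥0∞ := ∫⁻ x : E, ∫⁻ y : E, ENNReal.ofReal (f2 x y) with hL
  set W : ℝ → ℝ≥0∞ := fun r => (ENNReal.ofReal r ^ (k - 2))⁻¹ with hW
  have hWmeas : Measurable W := (ENNReal.measurable_ofReal.pow_const _).inv
  -- the pointwise bound
  have key : ∀ x y : E, ENNReal.ofReal (f2 x y)
      ≤ W ‖x - y‖ * ∫⁻ t in Ioc (0:ℝ) 1, ENNReal.ofReal (H (x + t • (y - x), ‖x - y‖)) := by
    intro x y
    rcases eq_or_ne x y with rfl | hxy
    · simp [hf2]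
    have hr : 0 < ‖x - y‖ := norm_sub_pos_iff.2 hxy
    set r : ℝ := ‖x - y‖ with hrdef
    have hryx : ‖y - x‖ = r := by rw [hrdef, norm_sub_rev]
    set g : ℝ → ℝ := fun t => ‖D (x + t • (y - x), r)‖ with hg
    have hψcont : Continuous fun t : ℝ => (x + t • (y - x), r) := by fun_prop
    have hgcont : Continuous g := (hDcont.comp hψcont).norm
    have hdercont : Continuous fun t : ℝ => (D (x + t • (y - x), r)) (y - x) :=
      (hDcont.comp hψcont).clm_apply continuous_const
    have hftc : ∫ t in (0:ℝ)..1, (D (x + t • (y - x), r)) (y - x) = u (y, r) - u (x, r) := by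
      have hψ : ∀ t : ℝ, HasDerivAt (fun t : ℝ => u (x + t • (y - x), r))
          ((D (x + t • (y - x), r)) (y - x)) t := by
        intro t
        have h1 : HasDerivAt (fun t : ℝ => x + t • (y - x)) (y - x) t := by
          simpa using ((hasDerivAt_id t).smul_const (y - x)).const_add x
        exact (hpd (x + t • (y - x)) r).comp_hasDerivAt (l := fun w => u (w, r))
            (f := fun t : ℝ => x + t • (y - x)) t h1
      rw [intervalIntegral.integral_eq_sub_of_hasDerivAt (fun t _ => hψ t)
        (hdercont.intervalIntegrable 0 1)]
      norm_num
    have hgint : IntegrableOn g (Ioc (0:ℝ) 1) := by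
      exact (hgcont.integrableOn_Icc (a := (0:ℝ)) (b := 1)).mono_set Ioc_subset_Icc_self
    have habs : |u (x, r) - u (y, r)| ≤ r * ∫ t in Ioc (0:ℝ) 1, g t := by
      have h1 : |u (x, r) - u (y, r)| = |∫ t in (0:ℝ)..1, (D (x + t • (y - x), r)) (y - x)| := by
        rw [hftc, abs_sub_comm]
      rw [h1]
      have h2 : |∫ t in (0:ℝ)..1, (D (x + t • (y - x), r)) (y - x)|
          ≤ ∫ t in (0:ℝ)..1, |(D (x + t • (y - x), r)) (y - x)| :=
        intervalIntegral.abs_integral_le_integral_abs zero_le_one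
      refine h2.trans ?_
      rw [intervalIntegral.integral_of_le zero_le_one]
      have h3 : ∀ t : ℝ, |(D (x + t • (y - x), r)) (y - x)| ≤ g t * r := by
        intro t
        calc |(D (x + t • (y - x), r)) (y - x)|
            ≤ ‖D (x + t • (y - x), r)‖ * ‖y - x‖ := (D _).le_opNorm _
        _ = g t * r := by rw [hryx]
      calc ∫ t in Ioc (0:ℝ) 1, |(D (x + t • (y - x), r)) (y - x)|
          ≤ ∫ t in Ioc (0:ℝ) 1, g t * r := by
            refine integral_mono_of_nonneg (ae_of_all _ fun t => abs_nonneg _)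
              (hgint.mul_const r) (ae_of_all _ h3)
      _ = r * ∫ t in Ioc (0:ℝ) 1, g t := by rw [integral_mul_const, mul_comm]
    -- pass to ENNReal
    have hIg : ENNReal.ofReal (∫ t in Ioc (0:ℝ) 1, g t)
        = ∫⁻ t in Ioc (0:ℝ) 1, ENNReal.ofReal (g t) :=
      ofReal_integral_eq_lintegral_ofReal hgint (ae_of_all _ fun t => norm_nonneg _)
    have hCS : (∫⁻ t in Ioc (0:ℝ) 1, ENNReal.ofReal (g t)) ^ 2
        ≤ ∫⁻ t in Ioc (0:ℝ) 1, ENNReal.ofReal (g t) ^ 2 :=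
      sq_lintegral_le_lintegral_sq (volume.restrict (Ioc (0:ℝ) 1)) _ (ENNReal.measurable_ofReal.comp hgcont.measurable).aemeasurable
    have hsq : ∀ t : ℝ, ENNReal.ofReal (g t) ^ 2 = ENNReal.ofReal (H (x + t • (y - x), r)) := by
      intro t
      rw [hH, ← ENNReal.ofReal_pow (norm_nonneg _)]
    set T : ℝ≥0∞ := ∫⁻ t in Ioc (0:ℝ) 1, ENNReal.ofReal (H (x + t • (y - x), r)) with hT
    have hT' : (∫⁻ t in Ioc (0:ℝ) 1, ENNReal.ofReal (g t)) ^ 2 ≤ T := by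
      refine hCS.trans_eq ?_
      exact lintegral_congr fun t => hsq t
    set a : ℝ≥0∞ := ENNReal.ofReal r with ha
    have ha0 : a ≠ 0 := (ENNReal.ofReal_pos.2 hr).ne'
    have hatop : a ≠ ∞ := ENNReal.ofReal_ne_top
    have step1 : ENNReal.ofReal (f2 x y) ≤ a ^ 2 * T / a ^ k := by
      rw [hf2]
      simp only
      rw [ENNReal.ofReal_div_of_pos (pow_pos hr k), ← hrdef]
      gcongr
      · rw [ENNReal.ofReal_pow (abs_nonneg _)]
        have h5 : ENNReal.ofReal |u (x, r) - u (y, r)|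
            ≤ a * ∫⁻ t in Ioc (0:ℝ) 1, ENNReal.ofReal (g t) := by
          rw [← hIg, ← ENNReal.ofReal_mul hr.le]
          exact ENNReal.ofReal_le_ofReal habs
        calc ENNReal.ofReal |u (x, r) - u (y, r)| ^ 2
            ≤ (a * ∫⁻ t in Ioc (0:ℝ) 1, ENNReal.ofReal (g t)) ^ 2 := by gcongr
        _ = a ^ 2 * (∫⁻ t in Ioc (0:ℝ) 1, ENNReal.ofReal (g t)) ^ 2 := mul_pow _ _ 2
        _ ≤ a ^ 2 * T := by gcongr
      · exact (ENNReal.ofReal_pow hr.le k).ge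
    have step2 : a ^ 2 * T / a ^ k = W r * T := by
      have hkk : k - 2 + 2 = k := by omega
      calc a ^ 2 * T / a ^ k = a ^ 2 * T * (a ^ (k - 2) * a ^ 2)⁻¹ := by
            rw [div_eq_mul_inv, ← pow_add, hkk]
      _ = a ^ 2 * T * ((a ^ (k - 2))⁻¹ * (a ^ 2)⁻¹) := by
            rw [ENNReal.mul_inv (Or.inl (pow_ne_zero _ ha0)) (Or.inl (ENNReal.pow_ne_top hatop))]
      _ = (a ^ (k - 2))⁻¹ * T * (a ^ 2 * (a ^ 2)⁻¹) := by ring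
      _ = W r * T := by
            rw [ENNReal.mul_inv_cancel (pow_ne_zero 2 ha0) (ENNReal.pow_ne_top hatop), mul_one, hW]
    exact step1.trans_eq step2
  -- main estimate
  have main : L ≤ c * R := by
    have hHm : Measurable H := hHcont.measurable
    set P : E → E → ℝ → ℝ≥0∞ :=
      fun x y t => W ‖x - y‖ * ENNReal.ofReal (H (x + t • (y - x), ‖x - y‖)) with hP
    clear_value P
    have hmeas3 : Measurable (fun q : E × E × ℝ => P q.1 q.2.1 q.2.2) := by
      rw [hP]
      exact (hWmeas.comp (by fun_prop)).mul
        (ENNReal.measurable_ofReal.comp (hHm.comp (by fun_prop)))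
    -- step 1: pointwise bound
    have step1 : L ≤ ∫⁻ x : E, ∫⁻ y : E, ∫⁻ t in Ioc (0:ℝ) 1, P x y t := by
      rw [hL]
      refine lintegral_mono fun x => lintegral_mono fun y => ?_
      refine (key x y).trans_eq ?_
      rw [hP]
      exact (lintegral_const_mul _
        (ENNReal.measurable_ofReal.comp (hHm.comp (by fun_prop)))).symm
    -- step 2: swaps
    have swap1 : ∀ x : E, (∫⁻ y : E, ∫⁻ t in Ioc (0:ℝ) 1, P x y t)
        = ∫⁻ t in Ioc (0:ℝ) 1, ∫⁻ y : E, P x y t := by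
      intro x
      apply lintegral_lintegral_swap
      have hm' : Measurable fun z : E × ℝ => P x z.1 z.2 := hmeas3.comp measurable_prodMk_left
      exact hm'.aemeasurable
    have hinnerm : Measurable (fun z : E × ℝ => ∫⁻ y : E, P z.1 y z.2) := by
      apply Measurable.lintegral_prod_right (f := fun (z : E × ℝ) (y : E) => P z.1 y z.2)
      exact hmeas3.comp (by fun_prop : Measurable fun q : (E × ℝ) × E => (q.1.1, q.2, q.1.2))
    have swap2 : (∫⁻ x : E, ∫⁻ t in Ioc (0:ℝ) 1, ∫⁻ y : E, P x y t)
        = ∫⁻ t in Ioc (0:ℝ) 1, ∫⁻ x : E, ∫⁻ y : E, P x y t :=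
      lintegral_lintegral_swap hinnerm.aemeasurable
    -- step 3: value of the slice for a fixed t
    have slice : ∀ t ∈ Ioc (0:ℝ) 1, (∫⁻ x : E, ∫⁻ y : E, P x y t) = c * R := by
      rintro t ⟨ht0, ht1⟩
      have htne : t ≠ 0 := ht0.ne'
      have hQm1 : Measurable (fun q : E × E =>
          W (t⁻¹ * ‖q.2 - q.1‖) * ENNReal.ofReal (H (q.2, t⁻¹ * ‖q.2 - q.1‖))) :=
        (hWmeas.comp (by fun_prop)).mul
          (ENNReal.measurable_ofReal.comp (hHm.comp (by fun_prop)))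
      -- inner substitution in y
      have inner1 : ∀ x : E, (∫⁻ y : E, P x y t)
          = ENNReal.ofReal |(t ^ m)⁻¹|
            * ∫⁻ z : E, W (t⁻¹ * ‖z - x‖) * ENNReal.ofReal (H (z, t⁻¹ * ‖z - x‖)) := by
        intro x
        set Θ : E → ℝ≥0∞ :=
          fun z => W (t⁻¹ * ‖z - x‖) * ENNReal.ofReal (H (z, t⁻¹ * ‖z - x‖)) with hΘ
        have hΘm : Measurable Θ := by
          rw [hΘ]
          exact (hWmeas.comp (by fun_prop)).mul
            (ENNReal.measurable_ofReal.comp (hHm.comp (by fun_prop)))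
        have hcomp : ∀ y : E, P x y t = (fun z => Θ (z + (1 - t) • x)) (t • y) := by
          intro y
          have hz : t • y + (1 - t) • x = x + t • (y - x) := by module
          have hnorm : t⁻¹ * ‖x + t • (y - x) - x‖ = ‖x - y‖ := by
            rw [add_sub_cancel_left, norm_smul, Real.norm_eq_abs, abs_of_pos ht0, ← mul_assoc,
              inv_mul_cancel₀ htne, one_mul, norm_sub_rev]
          simp only [hΘ, hP, hz, hnorm]
        calc (∫⁻ y : E, P x y t) = ∫⁻ y : E, (fun z => Θ (z + (1 - t) • x)) (t • y) :=
              lintegral_congr hcomp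
        _ = ENNReal.ofReal |(t ^ m)⁻¹| * ∫⁻ z : E, Θ (z + (1 - t) • x) :=
              lintegral_comp_smul' volume _ (hΘm.comp (measurable_add_const _)) htne
        _ = ENNReal.ofReal |(t ^ m)⁻¹| * ∫⁻ z : E, Θ z := by
              rw [lintegral_add_right_eq_self (μ := (volume : Measure E)) Θ ((1 - t) • x)]
      -- inner substitution in x, polar coordinates
      have inner2 : ∀ z : E,
          (∫⁻ x : E, W (t⁻¹ * ‖z - x‖) * ENNReal.ofReal (H (z, t⁻¹ * ‖z - x‖)))
          = ENNReal.ofReal (t ^ m)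
            * (c * ∫⁻ s in Ioi (0:ℝ), ENNReal.ofReal (H (z, s))) := by
        intro z
        set Λ : E → ℝ≥0∞ := fun v => W ‖v‖ * ENNReal.ofReal (H (z, ‖v‖)) with hΛ
        have hwm : Measurable (fun s : ℝ => W s * ENNReal.ofReal (H (z, s))) :=
          hWmeas.mul (ENNReal.measurable_ofReal.comp (hHm.comp (by fun_prop)))
        have hΛm : Measurable Λ := by
          rw [hΛ]; exact hwm.comp measurable_norm
        have hstep : ∀ x : E, W (t⁻¹ * ‖z - x‖) * ENNReal.ofReal (H (z, t⁻¹ * ‖z - x‖))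
            = (fun w => Λ (t⁻¹ • w)) (x + (-z)) := by
          intro x
          have hn : ‖t⁻¹ • (x + -z)‖ = t⁻¹ * ‖z - x‖ := by
            rw [norm_smul, Real.norm_eq_abs, abs_of_pos (inv_pos.2 ht0)]
            congr 1
            rw [← norm_neg]
            congr 1
            abel
          simp only [hΛ, hn]
        have polar : (∫⁻ v : E, Λ v) = c * ∫⁻ s in Ioi (0:ℝ), ENNReal.ofReal (H (z, s)) := by
          rw [hΛ]
          rw [lintegral_fun_norm_addHaar' (volume : Measure E)
            (fun s => W s * ENNReal.ofReal (H (z, s))) hwm]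
          rw [hc]
          congr 1
          refine setLIntegral_congr_fun measurableSet_Ioi (fun s hs => ?_)
          have hs0 : (0:ℝ) < s := hs
          have h1 : ENNReal.ofReal (s ^ (finrank ℝ E - 1)) = ENNReal.ofReal s ^ (k - 2) := by
            rw [ENNReal.ofReal_pow hs0.le]
            congr 1
            omega
          rw [hW, h1, ← mul_assoc,
            ENNReal.mul_inv_cancel (pow_ne_zero _ (ENNReal.ofReal_pos.2 hs0).ne')
              (ENNReal.pow_ne_top ENNReal.ofReal_ne_top), one_mul]
        calc (∫⁻ x : E, W (t⁻¹ * ‖z - x‖) * ENNReal.ofReal (H (z, t⁻¹ * ‖z - x‖)))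
            = ∫⁻ x : E, (fun w => Λ (t⁻¹ • w)) (x + (-z)) := lintegral_congr hstep
        _ = ∫⁻ w : E, Λ (t⁻¹ • w) :=
              lintegral_add_right_eq_self (μ := (volume : Measure E)) (fun w => Λ (t⁻¹ • w)) (-z)
        _ = ENNReal.ofReal |((t⁻¹) ^ m)⁻¹| * ∫⁻ v : E, Λ v :=
              lintegral_comp_smul' volume Λ hΛm (inv_ne_zero htne)
        _ = ENNReal.ofReal (t ^ m) * (c * ∫⁻ s in Ioi (0:ℝ), ENNReal.ofReal (H (z, s))) := by
              rw [polar, ← inv_pow, inv_inv, abs_of_pos (pow_pos ht0 m)]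
      -- put everything together
      have hxm : Measurable (fun x : E =>
          ∫⁻ z : E, W (t⁻¹ * ‖z - x‖) * ENNReal.ofReal (H (z, t⁻¹ * ‖z - x‖))) := by
        apply Measurable.lintegral_prod_right
          (f := fun (x : E) (z : E) => W (t⁻¹ * ‖z - x‖) * ENNReal.ofReal (H (z, t⁻¹ * ‖z - x‖)))
        exact hQm1
      have hzm : Measurable (fun z : E => ∫⁻ s in Ioi (0:ℝ), ENNReal.ofReal (H (z, s))) := by
        apply Measurable.lintegral_prod_right (f := fun (z : E) (s : ℝ) => ENNReal.ofReal (H (z, s)))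
        exact ENNReal.measurable_ofReal.comp (hHm.comp (by fun_prop))
      have hswap3 : (∫⁻ x : E, ∫⁻ z : E, W (t⁻¹ * ‖z - x‖) * ENNReal.ofReal (H (z, t⁻¹ * ‖z - x‖)))
          = ∫⁻ z : E, ∫⁻ x : E, W (t⁻¹ * ‖z - x‖) * ENNReal.ofReal (H (z, t⁻¹ * ‖z - x‖)) := by
        apply lintegral_lintegral_swap
        have hm' : Measurable fun q : E × E =>
            W (t⁻¹ * ‖q.2 - q.1‖) * ENNReal.ofReal (H (q.2, t⁻¹ * ‖q.2 - q.1‖)) :=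
          hQm1
        exact hm'.aemeasurable
      calc (∫⁻ x : E, ∫⁻ y : E, P x y t)
          = ∫⁻ x : E, ENNReal.ofReal |(t ^ m)⁻¹|
              * ∫⁻ z : E, W (t⁻¹ * ‖z - x‖) * ENNReal.ofReal (H (z, t⁻¹ * ‖z - x‖)) :=
            lintegral_congr inner1
      _ = ENNReal.ofReal |(t ^ m)⁻¹| * ∫⁻ x : E,
              ∫⁻ z : E, W (t⁻¹ * ‖z - x‖) * ENNReal.ofReal (H (z, t⁻¹ * ‖z - x‖)) :=
            lintegral_const_mul _ hxm
      _ = ENNReal.ofReal |(t ^ m)⁻¹| * ∫⁻ z : E,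
              ∫⁻ x : E, W (t⁻¹ * ‖z - x‖) * ENNReal.ofReal (H (z, t⁻¹ * ‖z - x‖)) := by
            rw [hswap3]
      _ = ENNReal.ofReal |(t ^ m)⁻¹| * ∫⁻ z : E, ENNReal.ofReal (t ^ m)
              * (c * ∫⁻ s in Ioi (0:ℝ), ENNReal.ofReal (H (z, s))) := by
            rw [lintegral_congr inner2]
      _ = ENNReal.ofReal |(t ^ m)⁻¹| * (ENNReal.ofReal (t ^ m)
              * (c * ∫⁻ z : E, ∫⁻ s in Ioi (0:ℝ), ENNReal.ofReal (H (z, s)))) := by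
            rw [lintegral_const_mul _ (hzm.const_mul c), lintegral_const_mul _ hzm]
      _ = c * R := by
            rw [hR, ← mul_assoc, ← ENNReal.ofReal_mul (abs_nonneg _)]
            have habs : |(t ^ m)⁻¹| * t ^ m = 1 := by
              rw [abs_of_pos (inv_pos.2 (pow_pos ht0 m)), inv_mul_cancel₀ (pow_pos ht0 m).ne']
            rw [habs, ENNReal.ofReal_one, one_mul]
    -- step 4: integrate over t
    have step4 : (∫⁻ t in Ioc (0:ℝ) 1, ∫⁻ x : E, ∫⁻ y : E, P x y t) = c * R := by
      rw [setLIntegral_congr_fun measurableSet_Ioc slice, setLIntegral_const,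
        Real.volume_Ioc]
      norm_num
    calc L ≤ ∫⁻ x : E, ∫⁻ y : E, ∫⁻ t in Ioc (0:ℝ) 1, P x y t := step1
    _ = ∫⁻ x : E, ∫⁻ t in Ioc (0:ℝ) 1, ∫⁻ y : E, P x y t := lintegral_congr swap1
    _ = ∫⁻ t in Ioc (0:ℝ) 1, ∫⁻ x : E, ∫⁻ y : E, P x y t := swap2
    _ = c * R := step4
  -- finiteness
  have hHint : Integrable H (volume : Measure (E × ℝ)) :=
    hHcont.integrable_of_hasCompactSupport hHcs
  have hRfin : R ≠ ∞ := by
    have h1 : R ≤ ∫⁻ p : E × ℝ, ENNReal.ofReal (H p) := by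
      rw [hR]
      refine le_trans (lintegral_mono fun z => setLIntegral_le_lintegral _ _) ?_
      rw [Measure.volume_eq_prod E ℝ, lintegral_prod (fun p : E × ℝ => ENNReal.ofReal (H p))
        ((ENNReal.measurable_ofReal.comp hHcont.measurable).aemeasurable)]
    exact (lt_of_le_of_lt h1 hHint.lintegral_lt_top).ne
  have hcfin : c ≠ ∞ := by
    exact ENNReal.mul_ne_top (ENNReal.natCast_ne_top m) measure_ball_lt_top.ne
  have hLfin : L ≠ ∞ := (lt_of_le_of_lt main (ENNReal.mul_lt_top hcfin.lt_top hRfin.lt_top)).ne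
  -- identification of the RHS
  have hRHS : (∫ p in {p : E × ℝ | 0 < p.2}, ‖fderiv ℝ (fun z : E => u (z, p.2)) p.1‖ ^ 2)
      = R.toReal := by
    have hSet : {p : E × ℝ | 0 < p.2} = (univ : Set E) ×ˢ Ioi (0:ℝ) := by
      ext p; simp [Set.mem_prod]
    have hRset : (∫⁻ p in {p : E × ℝ | 0 < p.2}, ENNReal.ofReal (H p)) = R := by
      rw [hSet, hR, Measure.volume_eq_prod E ℝ, ← Measure.prod_restrict, Measure.restrict_univ]
      exact lintegral_prod (fun p : E × ℝ => ENNReal.ofReal (H p))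
        ((ENNReal.measurable_ofReal.comp hHcont.measurable).aemeasurable)
    have hcongr : ∀ p : E × ℝ, ‖fderiv ℝ (fun z : E => u (z, p.2)) p.1‖ ^ 2 = H p := by
      intro p
      rw [hfd p.1 p.2, hH]
    simp only [hcongr]
    rw [integral_eq_lintegral_of_nonneg_ae (ae_of_all _ hHnn)
      hHcont.aestronglyMeasurable.restrict, hRset]
  -- identification of the LHS
  have hLHS : (∫ x : E, ∫ y : E, f2 x y) = L.toReal := by
    have hf2m : Measurable (fun q : E × E => f2 q.1 q.2) := by
      rw [hf2]
      apply Measurable.div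
      · exact (((hu.continuous.comp (by fun_prop)).sub
          (hu.continuous.comp (by fun_prop))).abs.pow 2).measurable
      · exact ((continuous_norm.comp (continuous_fst.sub continuous_snd)).pow k).measurable
    have hf2nn : ∀ q : E × E, 0 ≤ f2 q.1 q.2 := by
      intro q
      rw [hf2]
      positivity
    have hinner : ∀ x : E, (∫ y, f2 x y) = (∫⁻ y, ENNReal.ofReal (f2 x y)).toReal := by
      intro x
      exact integral_eq_lintegral_of_nonneg_ae (ae_of_all _ fun y => hf2nn (x, y))
        ((hf2m.comp measurable_prodMk_left).aestronglyMeasurable)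
    have hFm : Measurable (fun x : E => ∫⁻ y, ENNReal.ofReal (f2 x y)) := by
      apply Measurable.lintegral_prod_right (f := fun (x : E) (y : E) => ENNReal.ofReal (f2 x y))
      exact ENNReal.measurable_ofReal.comp hf2m
    calc (∫ x : E, ∫ y : E, f2 x y)
        = ∫ x : E, (∫⁻ y, ENNReal.ofReal (f2 x y)).toReal := by simp only [hinner]
    _ = L.toReal := by
        rw [hL]
        exact integral_toReal hFm.aemeasurable (ae_lt_top hFm (hL ▸ hLfin))
  have hgoal : (∫ x : E, ∫ y : E, |u (x, ‖x - y‖) - u (y, ‖x - y‖)| ^ 2 / ‖x - y‖ ^ k)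
      = ∫ x : E, ∫ y : E, f2 x y := by
    simp only [hf2]
  rw [hgoal, hLHS, hRHS, ← ENNReal.toReal_mul]
  exact ENNReal.toReal_mono (ENNReal.mul_ne_top hcfin hRfin) main

end AuxMain

/-- **Horizontal-difference bound (the term `S₂` in the continuous trace proof).**
There exists `C` depending only on `d` such that for every compactly supported `C¹`
function `u` on the (closed) half-space `ℝ^{d-1} × [0,∞)` (represented by a compactly
supported `C¹` extension to `ℝ^{d-1} × ℝ`), with `Ω = ℝ^{d-1} × (0,∞)`,
`∫∫ |u(x',|x'−y'|) − u(y',|x'−y'|)|² / |x'−y'|^d dx' dy' ≤ C ∫_Ω |∇_{x'} u|²`,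
where `∇_{x'} u` is the gradient in the first `d−1` coordinates. -/
theorem horizontal_difference_bound (d : ℕ) (hd : 2 ≤ d) :
    ∃ C : ℝ, 0 < C ∧
      ∀ u : EuclideanSpace ℝ (Fin (d - 1)) × ℝ → ℝ,
        ContDiff ℝ 1 u → HasCompactSupport u →
        (∫ x' : EuclideanSpace ℝ (Fin (d - 1)),
            ∫ y' : EuclideanSpace ℝ (Fin (d - 1)),
              |u (x', ‖x' - y'‖) - u (y', ‖x' - y'‖)| ^ 2 / ‖x' - y'‖ ^ d)
          ≤ C * ∫ p in {p : EuclideanSpace ℝ (Fin (d - 1)) × ℝ | 0 < p.2},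
                  ‖fderiv ℝ (fun z : EuclideanSpace ℝ (Fin (d - 1)) => u (z, p.2)) p.1‖ ^ 2 := by
  haveI : Nonempty (Fin (d - 1)) := ⟨⟨0, by omega⟩⟩
  set E := EuclideanSpace ℝ (Fin (d - 1)) with hE
  have hfr : finrank ℝ E = d - 1 := finrank_euclideanSpace_fin
  have hk : d = finrank ℝ E + 1 := by rw [hfr]; omega
  refine ⟨((finrank ℝ E : ℝ≥0∞) * volume (ball (0 : E) 1)).toReal, ?_, ?_⟩
  · apply ENNReal.toReal_pos
    · refine mul_ne_zero ?_ ?_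
      · rw [hfr]
        exact Nat.cast_ne_zero.2 (by omega)
      · exact (measure_ball_pos _ _ one_pos).ne'
    · exact ENNReal.mul_ne_top (ENNReal.natCast_ne_top _) measure_ball_lt_top.ne
  · intro u hu hcs
    exact horiz_aux d hk u hu hcs
end
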